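/- arXiv:0704.1678 — 5 statements merged into one kernel-verified Lean document; each statement's English description precedes it below -/
import Mathlib

section
/- Let (A,B) be an n×n bimatrix game with all entries in [0,1], let (x,y) be a Nash equilibrium, and let a = 2^{-P} for a positive integer P. Suppose (x̃,ỹ) satisfies 0 ≤ x_i - x̃_i ≤ a and 0 ≤ y_i - ỹ_i ≤ a for all i (a P-bit truncation), with ‖x̃‖₁ ≥ 1 - na and ‖ỹ‖₁ ≥ 1 - na and both nonzero. Then (x̄,ȳ) = (x̃/‖x̃‖₁, ỹ/‖ỹ‖₁) is a (3n·2^{-P})-approximate Nash equilibrium of (A,B). -/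
/-- The expected payoff `xᵀ A y`. -/
def pay {n : ℕ} (A : Matrix (Fin n) (Fin n) ℝ) (x y : Fin n → ℝ) : ℝ :=
  ∑ i, ∑ j, x i * A i j * y j

/-- `x` is a probability vector (a mixed strategy). -/
def isProb {n : ℕ} (x : Fin n → ℝ) : Prop := (∀ i, 0 ≤ x i) ∧ ∑ i, x i = 1

lemma pay_decomp {n : ℕ} (A : Matrix (Fin n) (Fin n) ℝ) (x xt y yt : Fin n → ℝ) :
    pay A x y = pay A xt yt + pay A (fun i => x i - xt i) y
      + pay A xt (fun j => y j - yt j) := by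
  simp only [pay, ← Finset.sum_add_distrib]
  exact Finset.sum_congr rfl fun i _ => Finset.sum_congr rfl fun j _ => by ring

lemma pay_div_left {n : ℕ} (A : Matrix (Fin n) (Fin n) ℝ) (u v : Fin n → ℝ) (c : ℝ) :
    pay A (fun i => u i / c) v = pay A u v / c := by
  simp only [pay, Finset.sum_div]
  exact Finset.sum_congr rfl fun i _ => Finset.sum_congr rfl fun j _ => by ring

lemma pay_div_right {n : ℕ} (A : Matrix (Fin n) (Fin n) ℝ) (u v : Fin n → ℝ) (c : ℝ) :
    pay A u (fun j => v j / c) = pay A u v / c := by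
  simp only [pay, Finset.sum_div]
  exact Finset.sum_congr rfl fun i _ => Finset.sum_congr rfl fun j _ => by ring

lemma pay_nonneg {n : ℕ} (A : Matrix (Fin n) (Fin n) ℝ) {u v : Fin n → ℝ}
    (hA : ∀ i j, 0 ≤ A i j) (hu : ∀ i, 0 ≤ u i) (hv : ∀ j, 0 ≤ v j) :
    0 ≤ pay A u v :=
  Finset.sum_nonneg fun i _ => Finset.sum_nonneg fun j _ =>
    mul_nonneg (mul_nonneg (hu i) (hA i j)) (hv j)

lemma pay_mono {n : ℕ} (A : Matrix (Fin n) (Fin n) ℝ) (hA : ∀ i j, 0 ≤ A i j)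
    {u u' v v' : Fin n → ℝ} (hu : ∀ i, 0 ≤ u i) (huu : ∀ i, u i ≤ u' i)
    (hv : ∀ j, 0 ≤ v j) (hvv : ∀ j, v j ≤ v' j) :
    pay A u v ≤ pay A u' v' := by
  refine Finset.sum_le_sum fun i _ => Finset.sum_le_sum fun j _ => ?_
  have h1 : 0 ≤ u' i := le_trans (hu i) (huu i)
  nlinarith [hA i j, hu i, huu i, hv j, hvv j, mul_nonneg (hA i j) (hv j),
    mul_nonneg h1 (hA i j)]

lemma pay_le_sum {n : ℕ} (A : Matrix (Fin n) (Fin n) ℝ) (hA1 : ∀ i j, A i j ≤ 1)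
    {u v : Fin n → ℝ} (hu : ∀ i, 0 ≤ u i) (hv : ∀ j, 0 ≤ v j) :
    pay A u v ≤ (∑ i, u i) * (∑ j, v j) := by
  rw [Finset.sum_mul_sum]
  refine Finset.sum_le_sum fun i _ => Finset.sum_le_sum fun j _ => ?_
  nlinarith [hu i, hv j, hA1 i j, mul_nonneg (hu i) (hv j)]

/-- Normalizing a P-bit truncation of a Nash equilibrium of a positively normalized game
gives a `(3n·2^{-P})`-approximate Nash equilibrium. -/
theorem bit_truncation_approx {n : ℕ}
    (A B : Matrix (Fin n) (Fin n) ℝ)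
    (hA : ∀ i j, A i j ∈ Set.Icc (0 : ℝ) 1)
    (hB : ∀ i j, B i j ∈ Set.Icc (0 : ℝ) 1)
    (x y : Fin n → ℝ) (hx : isProb x) (hy : isProb y)
    (hNash₁ : ∀ x' : Fin n → ℝ, isProb x' → pay A x y ≥ pay A x' y)
    (hNash₂ : ∀ y' : Fin n → ℝ, isProb y' → pay B x y ≥ pay B x y')
    (P : ℕ) (hP : 0 < P)
    (xt yt : Fin n → ℝ)
    (hxt : ∀ i, 0 ≤ xt i ∧ 0 ≤ x i - xt i ∧ x i - xt i ≤ 1 / 2 ^ P)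
    (hyt : ∀ i, 0 ≤ yt i ∧ 0 ≤ y i - yt i ∧ y i - yt i ≤ 1 / 2 ^ P)
    (hxt1 : 1 - n / 2 ^ P ≤ ∑ i, xt i) (hyt1 : 1 - n / 2 ^ P ≤ ∑ i, yt i)
    (hxt0 : 0 < ∑ i, xt i) (hyt0 : 0 < ∑ i, yt i) :
    let xb : Fin n → ℝ := fun i => xt i / ∑ l, xt l
    let yb : Fin n → ℝ := fun i => yt i / ∑ l, yt l
    isProb xb ∧ isProb yb ∧
    (∀ x' : Fin n → ℝ, isProb x' → pay A xb yb ≥ pay A x' yb - 3 * n / 2 ^ P) ∧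
    (∀ y' : Fin n → ℝ, isProb y' → pay B xb yb ≥ pay B xb y' - 3 * n / 2 ^ P) := by
  intro xb yb
  obtain ⟨hx0, hx1⟩ := hx
  obtain ⟨hy0, hy1⟩ := hy
  set s := ∑ l, xt l with hs
  set t := ∑ l, yt l with ht
  set a : ℝ := (n : ℝ) / 2 ^ P with ha
  have hA0 : ∀ i j, 0 ≤ A i j := fun i j => (hA i j).1
  have hA1 : ∀ i j, A i j ≤ 1 := fun i j => (hA i j).2
  have hB0 : ∀ i j, 0 ≤ B i j := fun i j => (hB i j).1
  have hB1 : ∀ i j, B i j ≤ 1 := fun i j => (hB i j).2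
  have hxt0' : ∀ i, 0 ≤ xt i := fun i => (hxt i).1
  have hyt0' : ∀ i, 0 ≤ yt i := fun i => (hyt i).1
  have hxtle : ∀ i, xt i ≤ x i := fun i => by linarith [(hxt i).2.1]
  have hytle : ∀ i, yt i ≤ y i := fun i => by linarith [(hyt i).2.1]
  have ha0 : (0 : ℝ) ≤ a := by positivity
  have hsle1 : s ≤ 1 := by
    rw [hs, ← hx1]; exact Finset.sum_le_sum fun i _ => hxtle i
  have htle1 : t ≤ 1 := by
    rw [ht, ← hy1]; exact Finset.sum_le_sum fun i _ => hytle i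
  have hxsum : ∑ i, (x i - xt i) ≤ a := by
    calc ∑ i, (x i - xt i) ≤ ∑ _i : Fin n, (1 / 2 ^ P : ℝ) :=
          Finset.sum_le_sum fun i _ => (hxt i).2.2
      _ = a := by simp [Finset.sum_const, Finset.card_univ, ha, mul_one_div, div_eq_mul_inv]
  have hysum : ∑ i, (y i - yt i) ≤ a := by
    calc ∑ i, (y i - yt i) ≤ ∑ _i : Fin n, (1 / 2 ^ P : ℝ) :=
          Finset.sum_le_sum fun i _ => (hyt i).2.2
      _ = a := by simp [Finset.sum_const, Finset.card_univ, ha, mul_one_div, div_eq_mul_inv]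
  have h3a : 3 * (n : ℝ) / 2 ^ P = 3 * a := by rw [ha]; ring
  have hxbprob : isProb xb := by
    refine ⟨fun i => div_nonneg (hxt0' i) hxt0.le, ?_⟩
    show ∑ i, xt i / s = 1
    rw [← Finset.sum_div, ← hs, div_self hxt0.ne']
  have hybprob : isProb yb := by
    refine ⟨fun i => div_nonneg (hyt0' i) hyt0.le, ?_⟩
    show ∑ i, yt i / t = 1
    rw [← Finset.sum_div, ← ht, div_self hyt0.ne']
  -- common decomposition bounds
  have hdecA : pay A x y ≤ pay A xt yt + 2 * a := by
    have := pay_decomp A x xt y yt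
    have h4 : pay A (fun i => x i - xt i) y ≤ a := by
      calc pay A (fun i => x i - xt i) y
          ≤ (∑ i, (x i - xt i)) * (∑ j, y j) :=
            pay_le_sum A hA1 (fun i => (hxt i).2.1) hy0
        _ ≤ a := by rw [hy1, mul_one]; exact hxsum
    have h5 : pay A xt (fun j => y j - yt j) ≤ a := by
      calc pay A xt (fun j => y j - yt j)
          ≤ (∑ i, xt i) * (∑ j, (y j - yt j)) :=
            pay_le_sum A hA1 hxt0' (fun j => (hyt j).2.1)
        _ ≤ 1 * a := by
            apply mul_le_mul hsle1 hysum (Finset.sum_nonneg fun j _ => (hyt j).2.1)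
            norm_num
        _ = a := one_mul a
    linarith
  have hdecB : pay B x y ≤ pay B xt yt + 2 * a := by
    have := pay_decomp B x xt y yt
    have h4 : pay B (fun i => x i - xt i) y ≤ a := by
      calc pay B (fun i => x i - xt i) y
          ≤ (∑ i, (x i - xt i)) * (∑ j, y j) :=
            pay_le_sum B hB1 (fun i => (hxt i).2.1) hy0
        _ ≤ a := by rw [hy1, mul_one]; exact hxsum
    have h5 : pay B xt (fun j => y j - yt j) ≤ a := by
      calc pay B xt (fun j => y j - yt j)
          ≤ (∑ i, xt i) * (∑ j, (y j - yt j)) :=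
            pay_le_sum B hB1 hxt0' (fun j => (hyt j).2.1)
        _ ≤ 1 * a := by
            apply mul_le_mul hsle1 hysum (Finset.sum_nonneg fun j _ => (hyt j).2.1)
            norm_num
        _ = a := one_mul a
    linarith
  refine ⟨hxbprob, hybprob, ?_, ?_⟩
  · -- row player
    intro x' hx'
    obtain ⟨hx'0, hx'1⟩ := hx'
    have e1 : pay A x' yb = pay A x' yt / t := pay_div_right A x' yt t
    have e2 : pay A xb yb = pay A xt yt / (s * t) := by
      have : pay A xb yb = pay A xt yb / s := pay_div_left A xt yb s
      rw [this, pay_div_right A xt yt t, div_div, mul_comm t s]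
    rw [ge_iff_le, h3a, e1, e2]
    by_cases hc : 3 * a ≤ 1
    · have key : pay A x' yt ≤ pay A xt yt / s + 3 * a * t := by
        have k1 : pay A x' yt ≤ pay A x' y :=
          pay_mono A hA0 hx'0 (fun i => le_refl _) hyt0' hytle
        have k2 : pay A x' y ≤ pay A x y := hNash₁ x' ⟨hx'0, hx'1⟩
        have k3 : pay A xt yt ≤ pay A xt yt / s := by
          rw [le_div_iff₀ hxt0]
          exact mul_le_of_le_one_right (pay_nonneg A hA0 hxt0' hyt0') hsle1
        have k4 : 2 * a ≤ 3 * a * t := by nlinarith [hyt1]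
        linarith
      have d1 : pay A x' yt / t ≤ (pay A xt yt / s + 3 * a * t) / t :=
        (div_le_div_iff_of_pos_right hyt0).mpr key
      have d2 : (pay A xt yt / s + 3 * a * t) / t = pay A xt yt / (s * t) + 3 * a := by
        field_simp
      linarith
    · push_neg at hc
      have u1 : pay A x' yt / t ≤ 1 := by
        rw [div_le_one hyt0]
        calc pay A x' yt ≤ (∑ i, x' i) * (∑ j, yt j) := pay_le_sum A hA1 hx'0 hyt0'
          _ = t := by rw [hx'1, one_mul, ht]
      have u2 : 0 ≤ pay A xt yt / (s * t) :=
        div_nonneg (pay_nonneg A hA0 hxt0' hyt0') (by positivity)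
      linarith
  · -- column player
    intro y' hy'
    obtain ⟨hy'0, hy'1⟩ := hy'
    have e1 : pay B xb y' = pay B xt y' / s := pay_div_left B xt y' s
    have e2 : pay B xb yb = pay B xt yt / (s * t) := by
      have : pay B xb yb = pay B xt yb / s := pay_div_left B xt yb s
      rw [this, pay_div_right B xt yt t, div_div, mul_comm t s]
    rw [ge_iff_le, h3a, e1, e2]
    by_cases hc : 3 * a ≤ 1
    · have key : pay B xt y' ≤ pay B xt yt / t + 3 * a * s := by
        have k1 : pay B xt y' ≤ pay B x y' :=
          pay_mono B hB0 hxt0' hxtle hy'0 (fun j => le_refl _)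
        have k2 : pay B x y' ≤ pay B x y := hNash₂ y' ⟨hy'0, hy'1⟩
        have k3 : pay B xt yt ≤ pay B xt yt / t := by
          rw [le_div_iff₀ hyt0]
          exact mul_le_of_le_one_right (pay_nonneg B hB0 hxt0' hyt0') htle1
        have k4 : 2 * a ≤ 3 * a * s := by nlinarith [hxt1]
        linarith
      have d1 : pay B xt y' / s ≤ (pay B xt yt / t + 3 * a * s) / s :=
        (div_le_div_iff_of_pos_right hxt0).mpr key
      have d2 : (pay B xt yt / t + 3 * a * s) / s = pay B xt yt / (s * t) + 3 * a := by
        field_simp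
      linarith
    · push_neg at hc
      have u1 : pay B xt y' / s ≤ 1 := by
        rw [div_le_one hxt0]
        calc pay B xt y' ≤ (∑ i, xt i) * (∑ j, y' j) := pay_le_sum B hB1 hxt0' hy'0
          _ = s := by rw [hy'1, mul_one, hs]
      have u2 : 0 ≤ pay B xt yt / (s * t) :=
        div_nonneg (pay_nonneg B hB0 hxt0' hyt0') (by positivity)
      linarith
end

section
/- High-dimensional discrete Brouwer fixed point theorem: let d ≥ 1 and r ∈ Z₊^d with r_i ≥ 2 for all i, and let A = {q ∈ Z^d : 0 ≤ q_i ≤ r_i - 1 for all i}. Suppose φ : A → {1,...,d+1} is a valid coloring, meaning: for every boundary point p (some coordinate p_i ∈ {0, r_i-1}), if some p_i = 0 then φ(p) = max{i : p_i = 0}, and otherwise (all p_i ≠ 0 and some p_i = r_i - 1) φ(p) = d+1. Then there exists a point p ∈ A with 0 ≤ p_i ≤ r_i - 2 for all i such that the unit hypercube K_p = {q ∈ Z^d : q_i ∈ {p_i, p_i+1} for all i} contains points of all d+1 colors. -/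
/-!
Kuhn's triangulation cuts the unit cube `K_b` into the simplices with vertices
`b, b + e (π 0), …, b + e (π 0) + ⋯ + e (π (d - 1))`, one for each permutation `π`. Call a facet
of such a simplex a door if its vertices carry every colour except `d + 1`; a simplex has an odd
number of doors iff it is panchromatic. A door is shared by exactly two Kuhn simplices of the grid
unless it lies on the boundary, and a valid colouring leaves only one boundary door: the facet in
`{q₀ = 0}` of the simplex at the origin with `π = rev`. Pairing the (simplex, door) incidences
through their two simplices shows that there is an odd number of them, so some simplex has an odd
number of doors.
-/

open Classical Finset Function Equiv

namespace Finset

theorem even_card_of_involutive {α : Type*} {s : Finset α} {g : α → α} (hg : Involutive g)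
    (hfix : ∀ x, g x ≠ x) (hmem : ∀ x ∈ s, g x ∈ s) : Even #s := by
  rw [← ZMod.natCast_eq_zero_iff_even, card_eq_sum_ones, Nat.cast_sum, Nat.cast_one]
  exact sum_involution (fun x _ => g x) (fun _ _ => by decide) (fun x _ _ => hfix x)
    (fun x hx => hmem x hx) (fun x _ => hg x)

variable {α : Type*} [DecidableEq α]

theorem odd_card_of_involutive {s : Finset α} {g : α → α} {a : α} (hg : Involutive g)
    (hfix : ∀ x, g x ≠ x) (ha : a ∈ s) (hga : g a ∉ s) (hmem : ∀ x ∈ s, x ≠ a → g x ∈ s) :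
    Odd #s := by
  have heven : Even #(s.erase a) := by
    refine even_card_of_involutive hg hfix fun x hx => ?_
    obtain ⟨hxa, hxs⟩ := mem_erase.1 hx
    refine mem_erase.2 ⟨fun hgx => hga ?_, hmem x hxs hxa⟩
    rwa [← hgx, hg x]
  rw [← card_erase_add_one ha]
  exact heven.add_one

variable [Fintype α]

theorem image_erase_eq_univ_image {f : α → α} {a b : α} (hab : a ≠ b) (hf : f a = f b) :
    (univ.erase a).image f = univ.image f := by
  refine (image_subset_image (erase_subset _ _)).antisymm fun x hx => ?_
  obtain ⟨c, -, rfl⟩ := mem_image.1 hx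
  by_cases hca : c = a
  · subst hca
    exact mem_image.2 ⟨b, mem_erase.2 ⟨hab.symm, mem_univ _⟩, hf.symm⟩
  · exact mem_image_of_mem _ (mem_erase.2 ⟨hca, mem_univ _⟩)

theorem even_card_filter_image_erase_eq {f : α → α} (hf : ¬ Injective f) (y : α) :
    Even #{k | (univ.erase k).image f = univ.erase y} := by
  obtain ⟨a, b, hfab, hab⟩ := not_injective_iff.1 hf
  -- erasing `a` or `b` keeps the image; otherwise `f` is not injective on `univ.erase k`
  have himage (k : α) : (univ.erase k).image f = univ.erase y ↔
      (k = a ∨ k = b) ∧ univ.image f = univ.erase y := by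
    by_cases hk : k = a ∨ k = b
    · rcases hk with rfl | rfl
      · simp [image_erase_eq_univ_image hab hfab]
      · simp [image_erase_eq_univ_image (Ne.symm hab) hfab.symm]
    · push Not at hk
      simp only [hk, false_or, false_and, iff_false]
      intro h
      have hcard := congrArg card h
      rw [card_erase_of_mem (mem_univ _), ← card_erase_of_mem (mem_univ k)] at hcard
      exact hab (card_image_iff.1 hcard (by simp [hk.1.symm]) (by simp [hk.2.symm]) hfab)
  have : ({k | (univ.erase k).image f = univ.erase y} : Finset α) =
      if univ.image f = univ.erase y then {a, b} else ∅ := by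
    ext k
    split_ifs with hP <;> simp [himage, hP]
  rw [this]
  split_ifs <;> simp [card_pair hab]

theorem odd_card_filter_image_erase_eq_iff (f : α → α) (y : α) :
    Odd #{k | (univ.erase k).image f = univ.erase y} ↔ Bijective f := by
  by_cases hinj : Injective f
  · have hbij : Bijective f := Finite.injective_iff_bijective.1 hinj
    obtain ⟨x, rfl⟩ := hbij.2 y
    have : ({k | (univ.erase k).image f = univ.erase (f x)} : Finset α) = {x} := by
      ext k
      rw [mem_filter, image_erase hinj, image_univ_of_surjective hbij.2,
        erase_inj _ (mem_univ _), hinj.eq_iff, mem_singleton]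
      simp
    simp only [this, card_singleton, odd_one, hbij]
  · exact iff_of_false (Nat.not_odd_iff_even.2 (even_card_filter_image_erase_eq hinj y))
      fun h => hinj h.1

end Finset

theorem Equiv.Perm.eq_one_of_forall_le {α : Type*} [PartialOrder α] [Finite α] {σ : Perm α}
    (h : ∀ x, x ≤ σ x) : σ = 1 := by
  have hpow : ∀ j x, x ≤ (σ ^ j) x := by
    intro j
    induction j with
    | zero => exact fun x => le_rfl
    | succ j ih => exact fun x => (ih x).trans (by rw [pow_succ', Perm.mul_apply]; exact h _)
  ext x
  have hN := (isOfFinOrder_of_finite σ).orderOf_pos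
  refine le_antisymm ?_ (h x)
  calc σ x ≤ (σ ^ (orderOf σ - 1)) (σ x) := hpow _ _
    _ = x := by rw [← Perm.mul_apply, pow_sub_one_mul hN.ne', pow_orderOf_eq_one, Perm.one_apply]

theorem Fin.eq_rev_of_antitone_of_surjective {k : ℕ} {f : Fin k → Fin k} (hf : Antitone f)
    (hs : Surjective f) : f = Fin.rev := by
  have hsurj : Surjective (f ∘ Fin.rev) := hs.comp Fin.rev_surjective
  have hmono : StrictMono (f ∘ Fin.rev) :=
    (hf.comp Fin.rev_anti).strictMono_of_injective (Finite.injective_iff_surjective.2 hsurj)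
  have : StrictMono.orderIsoOfSurjective _ hmono hsurj = OrderIso.refl _ := Subsingleton.elim _ _
  funext i
  simpa using congrArg (fun e => e (Fin.rev i)) this

theorem Fin.image_erase_last {β : Type*} [DecidableEq β] {k : ℕ} (f : Fin (k + 1) → β) :
    (univ.erase (Fin.last k)).image f = univ.image (f ∘ Fin.castSucc) := by
  ext x
  simp [Fin.exists_fin_succ']

theorem Fin.image_erase_zero {β : Type*} [DecidableEq β] {k : ℕ} (f : Fin (k + 1) → β) :
    (univ.erase 0).image f = univ.image (f ∘ Fin.succ) := by
  ext x
  simp [Fin.exists_fin_succ]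

theorem finRotate_inv_zero (n : ℕ) : (finRotate (n + 1))⁻¹ 0 = Fin.last n :=
  (finRotate _).symm_apply_eq.2 finRotate_last.symm

namespace DiscreteBrouwer

def IsValidColoring {d : ℕ} (r : Fin d → ℤ) (φ : (Fin d → ℤ) → Fin (d + 1)) : Prop :=
  ∀ p : Fin d → ℤ, (∀ i, 0 ≤ p i ∧ p i ≤ r i - 1) →
    (∀ h : (univ.filter fun i => p i = 0).Nonempty,
      φ p = Fin.castSucc ((univ.filter fun i => p i = 0).max' h)) ∧
    ((∀ i, p i ≠ 0) → (∃ i, p i = r i - 1) → φ p = Fin.last d)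

theorem IsValidColoring.eq_zero_of_apply_eq_castSucc {d : ℕ} {r : Fin d → ℤ}
    {φ : (Fin d → ℤ) → Fin (d + 1)} (hφ : IsValidColoring r φ) {p : Fin d → ℤ}
    (hp : ∀ i, 0 ≤ p i ∧ p i ≤ r i - 1) {i₀ : Fin d} (hi₀ : p i₀ = 0 ∨ p i₀ = r i₀ - 1)
    {j : Fin d} (hj : φ p = Fin.castSucc j) : p j = 0 := by
  by_cases hz : (univ.filter fun i => p i = 0).Nonempty
  · rw [(hφ p hp).1 hz, Fin.castSucc_inj] at hj
    simpa [hj] using max'_mem _ hz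
  · have hnz : ∀ i, p i ≠ 0 := fun i hi => hz ⟨i, by simpa using hi⟩
    rw [(hφ p hp).2 hnz ⟨i₀, hi₀.resolve_left (hnz i₀)⟩] at hj
    exact absurd hj (Fin.castSucc_lt_last j).ne'

section KuhnSimplex

variable {d : ℕ}

noncomputable def cubeCorners (r : Fin d → ℤ) : Finset (Fin d → ℤ) :=
  Fintype.piFinset fun i => Icc 0 (r i - 2)

theorem mem_cubeCorners {r b : Fin d → ℤ} : b ∈ cubeCorners r ↔ ∀ i, 0 ≤ b i ∧ b i ≤ r i - 2 := by
  simp [cubeCorners]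

theorem zero_mem_cubeCorners {r : Fin d → ℤ} (hr : ∀ i, 2 ≤ r i) : 0 ∈ cubeCorners r :=
  mem_cubeCorners.2 fun i => ⟨le_rfl, by simpa using hr i⟩

/-- `b + e (π 0) + ⋯ + e (π (m - 1))`, the `m`-th vertex of the Kuhn simplex with base `b` and
direction order `π`. -/
def kuhnVertex (b : Fin d → ℤ) (π : Perm (Fin d)) (m : ℕ) : Fin d → ℤ :=
  fun i => b i + if (π.symm i : ℕ) < m then 1 else 0

variable {b : Fin d → ℤ} {π : Perm (Fin d)} {m : ℕ}

theorem kuhnVertex_eq_or_eq_add_one (i : Fin d) :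
    kuhnVertex b π m i = b i ∨ kuhnVertex b π m i = b i + 1 := by
  unfold kuhnVertex
  split_ifs <;> simp

theorem kuhnVertex_eq_zero_iff {i : Fin d} (hb : 0 ≤ b i) :
    kuhnVertex b π m i = 0 ↔ b i = 0 ∧ m ≤ π.symm i := by
  unfold kuhnVertex
  split_ifs <;> omega

theorem kuhnVertex_eq_zero_of_le {i : Fin d} {m' : ℕ} (hb : 0 ≤ b i) (hm : m ≤ m')
    (h : kuhnVertex b π m' i = 0) : kuhnVertex b π m i = 0 := by
  rw [kuhnVertex_eq_zero_iff hb] at h ⊢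
  exact ⟨h.1, hm.trans h.2⟩

theorem kuhnVertex_mem_grid {r : Fin d → ℤ} (hb : b ∈ cubeCorners r) (i : Fin d) :
    0 ≤ kuhnVertex b π m i ∧ kuhnVertex b π m i ≤ r i - 1 := by
  have := mem_cubeCorners.1 hb i
  rcases kuhnVertex_eq_or_eq_add_one (π := π) (m := m) i with h | h <;> rw [h] <;> omega

theorem add_single_mem_cubeCorners {r : Fin d → ℤ} {j : Fin d} (hb : b ∈ cubeCorners r)
    (hj : b j ≠ r j - 2) : b + Pi.single j 1 ∈ cubeCorners r := by
  rw [mem_cubeCorners] at hb ⊢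
  intro i
  rcases eq_or_ne i j with rfl | hi
  · have := hb i
    simp only [Pi.add_apply, Pi.single_eq_same]
    omega
  · simpa [hi] using hb i

theorem sub_single_mem_cubeCorners {r : Fin d → ℤ} {j : Fin d} (hb : b ∈ cubeCorners r)
    (hj : b j ≠ 0) : b - Pi.single j 1 ∈ cubeCorners r := by
  rw [mem_cubeCorners] at hb ⊢
  intro i
  rcases eq_or_ne i j with rfl | hi
  · have := hb i
    simp only [Pi.sub_apply, Pi.single_eq_same]
    omega
  · simpa [hi] using hb i

end KuhnSimplex

section Pivot

variable {n : ℕ} {b : Fin (n + 1) → ℤ} {π : Perm (Fin (n + 1))} {m : ℕ}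

theorem kuhnVertex_rotate (hm : m ≤ n) :
    kuhnVertex (b + Pi.single (π 0) 1) (π * finRotate (n + 1)) m = kuhnVertex b π (m + 1) := by
  funext i
  obtain ⟨y, rfl⟩ := (π * finRotate (n + 1)).surjective i
  simp only [kuhnVertex, Perm.mul_def, symm_trans_apply, symm_apply_apply, trans_apply,
    Pi.add_apply]
  rcases eq_or_ne y (Fin.last n) with rfl | hy
  · simp [hm.not_gt]
  · have hy0 : finRotate (n + 1) y ≠ 0 := by
      rw [← finRotate_last]
      exact (finRotate _).injective.ne hy
    rw [Pi.single_eq_of_ne (π.injective.ne hy0), coe_finRotate_of_ne_last hy, add_zero]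
    congr 1
    split_ifs <;> omega

theorem kuhnVertex_swap (j : Fin n) (hm : m ≠ j + 1) :
    kuhnVertex b (π * swap j.castSucc j.succ) m = kuhnVertex b π m := by
  funext i
  obtain ⟨y, rfl⟩ := π.surjective i
  simp only [kuhnVertex, Perm.mul_def, symm_trans_apply, symm_apply_apply, symm_swap]
  congr 2
  rcases eq_or_ne y j.castSucc with rfl | hy₁
  · simp
    omega
  rcases eq_or_ne y j.succ with rfl | hy₂
  · simp
    omega
  rw [swap_apply_of_ne_of_ne hy₁ hy₂]

end Pivot

section Facet

variable {n : ℕ}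

/-- `(b, π, k)` is the facet of the Kuhn simplex with base `b` and direction order `π` opposite
its vertex `k`. -/
abbrev Facet (n : ℕ) := (Fin (n + 1) → ℤ) × Perm (Fin (n + 1)) × Fin (n + 1 + 1)

def IsDoor (φ : (Fin (n + 1) → ℤ) → Fin (n + 1 + 1)) (t : Facet n) : Prop :=
  (univ.erase t.2.2).image (fun m : Fin (n + 1 + 1) => φ (kuhnVertex t.1 t.2.1 m)) =
    univ.erase (Fin.last (n + 1))

/-- The same facet, seen from the other Kuhn simplex containing it: dropping the first (last)
vertex shifts the base by `e (π 0)` (by `-e (π n)`) and rotates `π`; dropping vertex `j + 1`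
swaps `π j` and `π (j + 1)`. -/
def pivot : Facet n → Facet n
  | (b, π, k) =>
    Fin.cases (b + Pi.single (π 0) 1, π * finRotate (n + 1), Fin.last (n + 1))
      (Fin.lastCases (b - Pi.single (π (Fin.last n)) 1, π * (finRotate (n + 1))⁻¹, 0)
        fun j => (b, π * swap j.castSucc j.succ, j.castSucc.succ)) k

variable (b : Fin (n + 1) → ℤ) (π : Perm (Fin (n + 1)))

@[simp] theorem pivot_zero :
    pivot (b, π, 0) = (b + Pi.single (π 0) 1, π * finRotate (n + 1), Fin.last (n + 1)) := rfl

@[simp] theorem pivot_last :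
    pivot (b, π, Fin.last (n + 1)) =
      (b - Pi.single (π (Fin.last n)) 1, π * (finRotate (n + 1))⁻¹, 0) := by
  rw [← Fin.succ_last]
  simp only [pivot, Fin.cases_succ, Fin.lastCases_last]

@[simp] theorem pivot_castSucc_succ (j : Fin n) :
    pivot (b, π, j.castSucc.succ) = (b, π * swap j.castSucc j.succ, j.castSucc.succ) := by
  simp [pivot]

theorem pivot_involutive : Involutive (pivot (n := n)) := by
  rintro ⟨b, π, k⟩
  induction k using Fin.cases with
  | zero => simp [mul_assoc]
  | succ k =>
    induction k using Fin.lastCases with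
    | last =>
      simp only [Fin.succ_last, pivot_last, pivot_zero, Perm.mul_apply, finRotate_inv_zero,
        sub_add_cancel, inv_mul_cancel_right]
    | cast j => simp [mul_assoc]

theorem pivot_ne_self (t : Facet n) : pivot t ≠ t := by
  obtain ⟨b, π, k⟩ := t
  induction k using Fin.cases with
  | zero => simp [Fin.ext_iff]
  | succ k => induction k using Fin.lastCases <;> simp [Fin.ext_iff]

variable (φ : (Fin (n + 1) → ℤ) → Fin (n + 1 + 1))

theorem isDoor_rotate_iff :
    IsDoor φ (b + Pi.single (π 0) 1, π * finRotate (n + 1), Fin.last (n + 1)) ↔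
      IsDoor φ (b, π, 0) := by
  simp only [IsDoor, Fin.image_erase_last, Fin.image_erase_zero]
  rw [show ((fun m : Fin (n + 1 + 1) => φ (kuhnVertex (b + Pi.single (π 0) 1)
      (π * finRotate (n + 1)) m)) ∘ Fin.castSucc) =
      (fun m : Fin (n + 1 + 1) => φ (kuhnVertex b π m)) ∘ Fin.succ
    from funext fun m => by simp [kuhnVertex_rotate (Fin.is_le m)]]

theorem isDoor_pivot_iff (t : Facet n) : IsDoor φ (pivot t) ↔ IsDoor φ t := by
  obtain ⟨b, π, k⟩ := t
  induction k using Fin.cases with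
  | zero => exact isDoor_rotate_iff b π φ
  | succ k =>
    induction k using Fin.lastCases with
    | last =>
      have h0 : (π * (finRotate (n + 1))⁻¹) 0 = π (Fin.last n) := by
        rw [Perm.mul_apply, finRotate_inv_zero]
      have h := isDoor_rotate_iff (b - Pi.single (π (Fin.last n)) 1) (π * (finRotate (n + 1))⁻¹) φ
      rw [h0, sub_add_cancel, inv_mul_cancel_right] at h
      rw [Fin.succ_last, pivot_last, h]
    | cast j =>
      have hface : (univ.erase j.castSucc.succ).image
          (fun m : Fin (n + 1 + 1) => φ (kuhnVertex b (π * swap j.castSucc j.succ) m)) =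
          (univ.erase j.castSucc.succ).image fun m : Fin (n + 1 + 1) => φ (kuhnVertex b π m) := by
        refine image_congr fun m hm => ?_
        have hm : (m : ℕ) ≠ j + 1 := fun h => (mem_erase.1 hm).1 (Fin.ext (by simpa using h))
        simp only [kuhnVertex_swap j hm]
      simp only [pivot_castSucc_succ, IsDoor, hface]

end Facet

section Boundary

variable {n : ℕ} {r : Fin (n + 1) → ℤ} {φ : (Fin (n + 1) → ℤ) → Fin (n + 1 + 1)}
  {b : Fin (n + 1) → ℤ} {π : Perm (Fin (n + 1))}

theorem not_isDoor_zero (hφ : IsValidColoring r φ) (hr : ∀ i, 2 ≤ r i) (hb : b ∈ cubeCorners r)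
    (htop : b (π 0) = r (π 0) - 2) : ¬ IsDoor φ (b, π, 0) := by
  intro hdoor
  obtain ⟨m, hm, hcolor⟩ : ∃ m ∈ univ.erase (0 : Fin (n + 1 + 1)),
      φ (kuhnVertex b π m) = (π 0).castSucc := by
    rw [← mem_image, hdoor]
    exact mem_erase.2 ⟨Fin.castSucc_ne_last _, mem_univ _⟩
  have hm : 0 < (m : ℕ) := Nat.pos_of_ne_zero fun h => (mem_erase.1 hm).1 (Fin.ext h)
  have htop' : kuhnVertex b π m (π 0) = r (π 0) - 1 := by
    simp only [kuhnVertex, symm_apply_apply, Fin.val_zero, hm, if_true]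
    omega
  have := hφ.eq_zero_of_apply_eq_castSucc (kuhnVertex_mem_grid hb) (Or.inr htop') hcolor
  have := hr (π 0)
  omega

theorem eq_corner_of_isDoor_last (hφ : IsValidColoring r φ) (hb : b ∈ cubeCorners r)
    (hdoor : IsDoor φ (b, π, Fin.last (n + 1))) (hbot : b (π (Fin.last n)) = 0) :
    b = 0 ∧ π = Fin.revPerm := by
  have hb0 : ∀ i, 0 ≤ b i := fun i => (mem_cubeCorners.1 hb i).1
  have hzero : ∀ m : Fin (n + 1),
      (univ.filter fun i => kuhnVertex b π m.castSucc i = 0).Nonempty := fun m =>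
    ⟨π (Fin.last n), by simpa [kuhnVertex_eq_zero_iff (hb0 _), hbot] using Fin.le_last m⟩
  -- the `m`-th vertex of the facet has colour `(c m).castSucc`
  let c (m : Fin (n + 1)) : Fin (n + 1) :=
    (univ.filter fun i => kuhnVertex b π m.castSucc i = 0).max' (hzero m)
  have hc_mem (m : Fin (n + 1)) : b (c m) = 0 ∧ m ≤ π.symm (c m) := by
    have h : kuhnVertex b π m.castSucc (c m) = 0 := (mem_filter.1 (max'_mem _ (hzero m))).2
    rw [kuhnVertex_eq_zero_iff (hb0 _)] at h
    exact ⟨h.1, Fin.le_def.2 (by simpa using h.2)⟩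
  have hc_anti : Antitone c := fun m m' hmm => max'_subset _ fun i hi => by
    simp only [mem_filter, mem_univ, true_and] at hi ⊢
    exact kuhnVertex_eq_zero_of_le (hb0 i) (by simpa using hmm) hi
  have hc_surj : Surjective c := fun j => by
    obtain ⟨m, hm, hcolor⟩ : ∃ m ∈ univ.erase (Fin.last (n + 1)),
        φ (kuhnVertex b π m) = j.castSucc := by
      rw [← mem_image, hdoor]
      exact mem_erase.2 ⟨Fin.castSucc_ne_last _, mem_univ _⟩
    obtain ⟨m, rfl⟩ := Fin.exists_castSucc_eq.2 (mem_erase.1 hm).1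
    rw [(hφ _ (kuhnVertex_mem_grid hb)).1 (hzero m), Fin.castSucc_inj] at hcolor
    exact ⟨m, hcolor⟩
  have hcπ : c = π := by
    let τ : Perm (Fin (n + 1)) :=
      (Equiv.ofBijective c (Finite.surjective_iff_bijective.1 hc_surj)).trans π.symm
    have hτ : τ = 1 := Perm.eq_one_of_forall_le fun m => (hc_mem m).2
    funext m
    simpa [τ, symm_apply_eq] using congrArg (· m) hτ
  have hπ : π = Fin.revPerm := Equiv.ext <| congrFun <|
    Fin.eq_rev_of_antitone_of_surjective (hcπ ▸ hc_anti) (hcπ ▸ hc_surj)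
  refine ⟨funext fun j => ?_, hπ⟩
  obtain ⟨m, rfl⟩ := hc_surj j
  exact (hc_mem m).1

theorem isDoor_corner (hφ : IsValidColoring r φ) (hr : ∀ i, 2 ≤ r i) :
    IsDoor φ (0, Fin.revPerm, Fin.last (n + 1)) := by
  have hzero (m i : Fin (n + 1)) : kuhnVertex 0 Fin.revPerm m i = 0 ↔ i ≤ m.rev := by
    rw [kuhnVertex_eq_zero_iff le_rfl, Fin.le_rev_iff]
    simp [Fin.le_def]
  have hcolor (m : Fin (n + 1)) :
      φ (kuhnVertex 0 Fin.revPerm m) = m.rev.castSucc := by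
    have hne : (univ.filter fun i => kuhnVertex 0 Fin.revPerm m i = 0).Nonempty :=
      ⟨m.rev, mem_filter.2 ⟨mem_univ _, (hzero m _).2 le_rfl⟩⟩
    rw [(hφ _ (kuhnVertex_mem_grid (zero_mem_cubeCorners hr))).1 hne, Fin.castSucc_inj]
    exact le_antisymm (max'_le _ _ _ fun i hi => (hzero m i).1 (mem_filter.1 hi).2)
      (le_max' _ m.rev (mem_filter.2 ⟨mem_univ _, (hzero m _).2 le_rfl⟩))
  have hface : (fun m : Fin (n + 1 + 1) => φ (kuhnVertex 0 Fin.revPerm m)) ∘ Fin.castSucc =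
      Fin.castSucc ∘ Fin.rev := funext fun m => by simpa using hcolor m
  simp only [IsDoor, Fin.image_erase_last, hface, ← image_image,
    image_univ_of_surjective Fin.rev_surjective]
  ext x
  induction x using Fin.lastCases <;> simp

end Boundary

section Doors

variable {n : ℕ} {r : Fin (n + 1) → ℤ} {φ : (Fin (n + 1) → ℤ) → Fin (n + 1 + 1)}

variable (r φ) in
noncomputable def doors : Finset (Facet n) :=
  (cubeCorners r ×ˢ univ ×ˢ univ).filter (IsDoor φ)

theorem mem_doors {t : Facet n} : t ∈ doors r φ ↔ t.1 ∈ cubeCorners r ∧ IsDoor φ t := by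
  simp [doors]

theorem pivot_mem_doors (hφ : IsValidColoring r φ) (hr : ∀ i, 2 ≤ r i) {t : Facet n}
    (ht : t ∈ doors r φ) (hne : t ≠ (0, Fin.revPerm, Fin.last (n + 1))) :
    pivot t ∈ doors r φ := by
  obtain ⟨b, π, k⟩ := t
  obtain ⟨hb, hdoor⟩ := mem_doors.1 ht
  refine mem_doors.2 ⟨?_, (isDoor_pivot_iff φ _).2 hdoor⟩
  induction k using Fin.cases with
  | zero => exact add_single_mem_cubeCorners hb fun htop => not_isDoor_zero hφ hr hb htop hdoor
  | succ k =>
    induction k using Fin.lastCases with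
    | last =>
      rw [Fin.succ_last] at hdoor hne ⊢
      rw [pivot_last]
      refine sub_single_mem_cubeCorners hb fun hbot => hne ?_
      obtain ⟨rfl, rfl⟩ := eq_corner_of_isDoor_last hφ hb hdoor hbot
      rfl
    | cast j => rwa [pivot_castSucc_succ]

theorem odd_card_doors (hφ : IsValidColoring r φ) (hr : ∀ i, 2 ≤ r i) : Odd #(doors r φ) := by
  refine odd_card_of_involutive pivot_involutive pivot_ne_self
    (mem_doors.2 ⟨zero_mem_cubeCorners hr, isDoor_corner hφ hr⟩)
    (fun h => ?_) fun t ht hne => pivot_mem_doors hφ hr ht hne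
  have := (mem_cubeCorners.1 (mem_doors.1 h).1 (Fin.revPerm (Fin.last n))).1
  simp at this

theorem card_doors_eq_sum : #(doors r φ) =
    ∑ b ∈ cubeCorners r, ∑ π : Perm (Fin (n + 1)), #{k | IsDoor φ (b, π, k)} := by
  simp only [doors, card_filter, sum_product]

theorem exists_bijective_kuhnVertex (hφ : IsValidColoring r φ) (hr : ∀ i, 2 ≤ r i) :
    ∃ b ∈ cubeCorners r, ∃ π : Perm (Fin (n + 1)),
      Bijective fun k : Fin (n + 1 + 1) => φ (kuhnVertex b π k) := by
  have hodd := odd_card_doors hφ hr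
  rw [card_doors_eq_sum, odd_sum_iff_odd_card_odd] at hodd
  obtain ⟨b, hb⟩ := card_pos.1 hodd.pos
  rw [mem_filter, odd_sum_iff_odd_card_odd] at hb
  obtain ⟨π, hπ⟩ := card_pos.1 hb.2.pos
  refine ⟨b, hb.1, π, (odd_card_filter_image_erase_eq_iff _ (Fin.last (n + 1))).1 ?_⟩
  convert (mem_filter.1 hπ).2 using 3
  exact Iff.rfl

end Doors

end DiscreteBrouwer

/-- High-dimensional discrete Brouwer fixed point theorem: any valid coloring of the
hypergrid `A = {q : 0 ≤ qᵢ ≤ rᵢ - 1}` with `d+1` colors has a panchromatic unit hypercube. -/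
theorem discrete_brouwer_fixed_point
    (d : ℕ) (hd : 1 ≤ d) (r : Fin d → ℤ) (hr : ∀ i, 2 ≤ r i)
    (φ : (Fin d → ℤ) → Fin (d + 1))
    (hvalid : ∀ p : Fin d → ℤ, (∀ i, 0 ≤ p i ∧ p i ≤ r i - 1) →
      (∀ h : (Finset.univ.filter (fun i => p i = 0)).Nonempty,
        φ p = Fin.castSucc ((Finset.univ.filter (fun i => p i = 0)).max' h)) ∧
      ((∀ i, p i ≠ 0) → (∃ i, p i = r i - 1) → φ p = Fin.last d)) :
    ∃ p : Fin d → ℤ, (∀ i, 0 ≤ p i ∧ p i ≤ r i - 2) ∧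
      ∀ c : Fin (d + 1), ∃ q : Fin d → ℤ,
        (∀ i, q i = p i ∨ q i = p i + 1) ∧ φ q = c := by
  obtain ⟨n, rfl⟩ : ∃ n, d = n + 1 := ⟨d - 1, by omega⟩
  obtain ⟨b, hb, π, hbij⟩ := DiscreteBrouwer.exists_bijective_kuhnVertex hvalid hr
  refine ⟨b, DiscreteBrouwer.mem_cubeCorners.1 hb, fun c => ?_⟩
  obtain ⟨k, rfl⟩ := hbij.2 c
  exact ⟨DiscreteBrouwer.kuhnVertex b π k, DiscreteBrouwer.kuhnVertex_eq_or_eq_add_one, rfl⟩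
end

section
/- Existence of a panchromatic simplex: under the hypotheses of the high-dimensional discrete Brouwer fixed point theorem (valid coloring φ of the hypergrid A with d+1 colors), there exists an accommodated subset P ⊆ A of exactly d+1 points receiving d+1 distinct colors under φ, where accommodated means P ⊆ K_p for some p (all points of P lie in a common unit hypercube). -/
open Classical

open Finset
attribute [local instance] Classical.propDecidable

namespace Panch
variable {d : ℕ}

/-- vertex `k` of the Kuhn simplex with base `p` and permutation `π`. -/
def vtx (p : Fin d → ℤ) (π : Equiv.Perm (Fin d)) (k : Fin (d+1)) : Fin d → ℤ :=
  fun i => p i + if ((π.symm i : ℕ) < (k : ℕ)) then 1 else 0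

def cons0 (w : Fin d → ℤ) : Fin (d+1) → ℤ := Fin.cons 0 w

@[simp] lemma cons0_zero (w : Fin d → ℤ) : cons0 w 0 = 0 := rfl

@[simp] lemma cons0_succ (w : Fin d → ℤ) (i : Fin d) : cons0 w i.succ = w i := by
  simp [cons0]

def Valid (r : Fin d → ℤ) (φ : (Fin d → ℤ) → Fin (d+1)) : Prop :=
  ∀ p : Fin d → ℤ, (∀ i, 0 ≤ p i ∧ p i ≤ r i - 1) →
      (∀ h : (Finset.univ.filter (fun i => p i = 0)).Nonempty,
        φ p = Fin.castSucc ((Finset.univ.filter (fun i => p i = 0)).max' h)) ∧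
      ((∀ i, p i ≠ 0) → (∃ i, p i = r i - 1) → φ p = Fin.last d)

def Pan (φ : (Fin d → ℤ) → Fin (d+1)) (p : Fin d → ℤ) (π : Equiv.Perm (Fin d)) : Prop :=
  Function.Surjective (fun k : Fin (d+1) => φ (vtx p π k))

/-- door on the facet omitting vertex `j` : all colors except `last` appear. -/
def DoorF (f : Fin (d+1) → Fin (d+1)) (j : Fin (d+1)) : Prop :=
  ∀ c : Fin d, ∃ k, k ≠ j ∧ f k = Fin.castSucc c

lemma card_doorF (f : Fin (d+1) → Fin (d+1)) :
    ((univ.filter (DoorF f)).card : ZMod 2) = if Function.Surjective f then 1 else 0 := by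
  by_cases hs : Function.Surjective f
  · have hinj : Function.Injective f := Finite.injective_iff_surjective.2 hs
    have hset : univ.filter (DoorF f) = {Fintype.bijInv ⟨hinj, hs⟩ (Fin.last d)} := by
      ext j
      simp only [mem_filter, mem_univ, true_and, mem_singleton]
      constructor
      · intro hj
        rcases Fin.eq_castSucc_or_eq_last (f j) with ⟨c, hc⟩ | hc
        · rcases hj c with ⟨k, hk, hfk⟩
          exact absurd (hinj (hfk.trans hc.symm)) hk
        · have := congrArg (Fintype.bijInv ⟨hinj, hs⟩) hc
          rwa [Fintype.leftInverse_bijInv ⟨hinj, hs⟩ j] at this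
      · rintro rfl
        intro c
        refine ⟨Fintype.bijInv ⟨hinj, hs⟩ (Fin.castSucc c), ?_, ?_⟩
        · intro h
          have h1 := Fintype.rightInverse_bijInv ⟨hinj, hs⟩ (Fin.castSucc c)
          have h2 := Fintype.rightInverse_bijInv ⟨hinj, hs⟩ (Fin.last d)
          have := congrArg f h
          rw [h1, h2] at this
          exact absurd this (Fin.castSucc_lt_last c).ne
        · exact Fintype.rightInverse_bijInv _ _
    rw [hset, if_pos hs]
    simp
  · rw [if_neg hs]
    by_cases hall : ∀ c : Fin d, ∃ k, f k = Fin.castSucc c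
    · -- f hits all castSucc colors but is not surjective; not injective
      have hninj : ¬ Function.Injective f := fun h => hs (Finite.injective_iff_surjective.1 h)
      rw [Function.not_injective_iff] at hninj
      obtain ⟨a, b, hab, hne⟩ := hninj
      choose K hK using hall
      have hset : univ.filter (DoorF f) = {a, b} := by
        ext j
        simp only [mem_filter, mem_univ, true_and, mem_insert, mem_singleton]
        constructor
        · intro hj
          by_contra hjab
          push_neg at hjab
          choose K' hK'ne hK' using hj
          set G : Fin (d+1) → Fin (d+1) := Fin.lastCases j K' with hG
          have hGinj : Function.Injective G := by
            intro x y hxy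
            induction x using Fin.lastCases with
            | last =>
              induction y using Fin.lastCases with
              | last => rfl
              | cast y =>
                rw [hG] at hxy
                simp only [Fin.lastCases_last, Fin.lastCases_castSucc] at hxy
                exact absurd hxy.symm (hK'ne y)
            | cast x =>
              induction y using Fin.lastCases with
              | last =>
                rw [hG] at hxy
                simp only [Fin.lastCases_last, Fin.lastCases_castSucc] at hxy
                exact absurd hxy (hK'ne x)
              | cast y =>
                rw [hG] at hxy
                simp only [Fin.lastCases_castSucc] at hxy
                have hfe : Fin.castSucc x = Fin.castSucc y := by
                  rw [← hK' x, ← hK' y, hxy]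
                exact congrArg _ (Fin.castSucc_injective _ hfe)
          have hGsurj : Function.Surjective G := Finite.injective_iff_surjective.1 hGinj
          obtain ⟨x, hx⟩ := hGsurj a
          obtain ⟨y, hy⟩ := hGsurj b
          have hfa : ∃ c, f a = Fin.castSucc c ∧ K' c = a := by
            induction x using Fin.lastCases with
            | last =>
              rw [hG] at hx; simp only [Fin.lastCases_last] at hx
              exact absurd hx hjab.1
            | cast x =>
              rw [hG] at hx; simp only [Fin.lastCases_castSucc] at hx
              exact ⟨x, by rw [← hx, hK' x], hx⟩
          have hfb : ∃ c, f b = Fin.castSucc c ∧ K' c = b := by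
            induction y using Fin.lastCases with
            | last =>
              rw [hG] at hy; simp only [Fin.lastCases_last] at hy
              exact absurd hy hjab.2
            | cast y =>
              rw [hG] at hy; simp only [Fin.lastCases_castSucc] at hy
              exact ⟨y, by rw [← hy, hK' y], hy⟩
          obtain ⟨c1, hc1, hKc1⟩ := hfa
          obtain ⟨c2, hc2, hKc2⟩ := hfb
          have : c1 = c2 := Fin.castSucc_injective _ (by rw [← hc1, ← hc2, hab])
          exact hne (hKc1 ▸ hKc2 ▸ congrArg K' this)
        · intro hj c
          by_cases hKj : K c = j
          · have hfj : f j = Fin.castSucc c := hKj ▸ hK c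
            rcases hj with h | h
            · refine ⟨b, ?_, ?_⟩
              · rw [h]; exact fun hh => hne hh.symm
              · rw [← hab, ← h]; exact hfj
            · refine ⟨a, ?_, ?_⟩
              · rw [h]; exact hne
              · rw [hab, ← h]; exact hfj
          · exact ⟨K c, hKj, hK c⟩
      rw [hset, card_pair hne]
      decide
    · -- some castSucc color missing : no doors
      push_neg at hall
      obtain ⟨c, hc⟩ := hall
      have hset : univ.filter (DoorF f) = ∅ := by
        ext j
        simp only [mem_filter, mem_univ, true_and, notMem_empty, iff_false]
        intro hj
        obtain ⟨k, _, hk⟩ := hj c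
        exact hc k hk
      rw [hset]; simp

end Panch

namespace Panch
variable {d : ℕ}

lemma castSucc_add_one' (a : Fin d) : (Fin.castSucc a + 1) = a.succ := by
  apply Fin.ext
  rw [Fin.val_add_one_of_lt (Fin.castSucc_lt_last a)]
  simp

/-- add 1 to coordinate i0 -/
def pδ (p : Fin d → ℤ) (i0 : Fin d) : Fin d → ℤ := fun i => p i + if i = i0 then 1 else 0

lemma rot_vtx (p : Fin (d+1) → ℤ) (π : Equiv.Perm (Fin (d+1))) (k : Fin (d+1)) :
    vtx (pδ p (π 0)) ((finRotate (d+1)).trans π) k.castSucc = vtx p π k.succ := by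
  funext i
  have hsymm : ((finRotate (d+1)).trans π).symm i = (finRotate (d+1)).symm (π.symm i) := rfl
  have hm : π.symm i = finRotate (d+1) ((finRotate (d+1)).symm (π.symm i)) :=
    ((finRotate (d+1)).apply_symm_apply _).symm
  rcases Fin.eq_castSucc_or_eq_last ((finRotate (d+1)).symm (π.symm i)) with ⟨a, ha⟩ | ha
  · -- π.symm i = a.succ, i ≠ π 0
    rw [ha] at hm
    rw [finRotate_succ_apply, castSucc_add_one'] at hm
    have hne : i ≠ π 0 := by
      intro h
      rw [h, Equiv.symm_apply_apply] at hm
      exact (Fin.succ_ne_zero a) hm.symm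
    simp only [vtx, pδ, hsymm, ha, if_neg hne]
    rw [hm]
    have h1 : ((a.castSucc : Fin (d+1)) : ℕ) = (a : ℕ) := rfl
    have h2 : ((a.succ : Fin (d+1)) : ℕ) = (a : ℕ) + 1 := rfl
    have h3 : ((k.castSucc : Fin (d+2)) : ℕ) = (k : ℕ) := rfl
    have h4 : ((k.succ : Fin (d+2)) : ℕ) = (k : ℕ) + 1 := rfl
    rw [h1, h2, h3, h4]
    by_cases hak : (a:ℕ) < (k:ℕ)
    · rw [if_pos hak, if_pos (Nat.succ_lt_succ hak)]; ring
    · rw [if_neg hak, if_neg (fun h => hak (Nat.lt_of_succ_lt_succ h))]; ring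
  · -- π.symm i = 0, i = π 0
    rw [ha] at hm
    rw [finRotate_succ_apply, Fin.last_add_one] at hm
    have heq : i = π 0 := by rw [← hm, Equiv.apply_symm_apply]
    simp only [vtx, pδ, hsymm, ha, if_pos heq]
    rw [hm]
    have h3 : ((k.castSucc : Fin (d+2)) : ℕ) = (k : ℕ) := rfl
    have h4 : ((k.succ : Fin (d+2)) : ℕ) = (k : ℕ) + 1 := rfl
    rw [h3, h4]
    have hlt : ¬ ((Fin.last d : Fin (d+1)) : ℕ) < (k:ℕ) := by
      simp only [Fin.val_last, not_lt]
      exact Nat.le_of_lt_succ k.isLt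
    have hlt0 : ((0 : Fin (d+1)) : ℕ) < (k:ℕ) + 1 := Nat.succ_pos _
    rw [if_neg hlt, if_pos hlt0]
    ring

end Panch

namespace Panch
variable {d : ℕ}

lemma swap_vtx (p : Fin d → ℤ) (π : Equiv.Perm (Fin d)) (a b : Fin d)
    (hab : (a:ℕ) + 1 = (b:ℕ)) (k : Fin (d+1)) (hk : (k:ℕ) ≠ (b:ℕ)) :
    vtx p ((Equiv.swap a b).trans π) k = vtx p π k := by
  funext i
  have hsymm : ((Equiv.swap a b).trans π).symm i = Equiv.swap a b (π.symm i) := by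
    simp [Equiv.symm_trans_apply, Equiv.symm_swap]
  simp only [vtx, hsymm]
  congr 1
  rcases eq_or_ne (π.symm i) a with h | h
  · rw [h, Equiv.swap_apply_left]
    have : ((b:ℕ) < (k:ℕ)) ↔ ((a:ℕ) < (k:ℕ)) := by omega
    simp [this]
  · rcases eq_or_ne (π.symm i) b with h2 | h2
    · rw [h2, Equiv.swap_apply_right]
      have : ((a:ℕ) < (k:ℕ)) ↔ ((b:ℕ) < (k:ℕ)) := by omega
      simp [this]
    · rw [Equiv.swap_apply_of_ne_of_ne h h2]

def Door (φ : (Fin d → ℤ) → Fin (d+1)) (p : Fin d → ℤ) (π : Equiv.Perm (Fin d))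
    (j : Fin (d+1)) : Prop :=
  DoorF (fun k => φ (vtx p π k)) j

lemma door_swap (φ : (Fin d → ℤ) → Fin (d+1)) (p : Fin d → ℤ) (π : Equiv.Perm (Fin d))
    (a b : Fin d) (hab : (a:ℕ) + 1 = (b:ℕ)) (j : Fin (d+1)) (hj : (j:ℕ) = (b:ℕ)) :
    Door φ p ((Equiv.swap a b).trans π) j ↔ Door φ p π j := by
  have hv : ∀ k : Fin (d+1), k ≠ j → vtx p ((Equiv.swap a b).trans π) k = vtx p π k := by
    intro k hk
    exact swap_vtx p π a b hab k (by rw [← hj]; exact fun h => hk (Fin.ext h))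
  constructor <;> intro hD c <;> obtain ⟨k, hk, hc⟩ := hD c
  · exact ⟨k, hk, by show φ (vtx p π k) = _; rw [← hv k hk]; exact hc⟩
  · exact ⟨k, hk, by show φ (vtx p ((Equiv.swap a b).trans π) k) = _; rw [hv k hk]; exact hc⟩

lemma door_rot (φ : (Fin (d+1) → ℤ) → Fin (d+2)) (p : Fin (d+1) → ℤ)
    (π : Equiv.Perm (Fin (d+1))) :
    Door φ p π 0 ↔ Door φ (pδ p (π 0)) ((finRotate (d+1)).trans π) (Fin.last (d+1)) := by
  constructor <;> intro hD c <;> obtain ⟨k, hk, hc⟩ := hD c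
  · obtain ⟨k₀, rfl⟩ := Fin.eq_succ_of_ne_zero hk
    refine ⟨k₀.castSucc, (Fin.castSucc_lt_last k₀).ne, ?_⟩
    show φ (vtx _ _ k₀.castSucc) = _
    rw [rot_vtx]
    exact hc
  · rcases Fin.eq_castSucc_or_eq_last k with ⟨k₀, rfl⟩ | rfl
    · refine ⟨k₀.succ, Fin.succ_ne_zero k₀, ?_⟩
      show φ (vtx p π k₀.succ) = _
      rw [← rot_vtx]
      exact hc
    · exact absurd rfl hk

end Panch

namespace Panch
variable {d : ℕ}

lemma mem_base {r p : Fin d → ℤ} :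
    p ∈ Finset.Icc 0 (fun i => r i - 2) ↔ ∀ i, 0 ≤ p i ∧ p i ≤ r i - 2 := by
  rw [Finset.mem_Icc]
  constructor
  · rintro ⟨h1, h2⟩ i; exact ⟨h1 i, h2 i⟩
  · intro h; exact ⟨fun i => (h i).1, fun i => (h i).2⟩

lemma vtx_grid {r p : Fin d → ℤ} (hp : ∀ i, 0 ≤ p i ∧ p i ≤ r i - 2)
    (π : Equiv.Perm (Fin d)) (k : Fin (d+1)) :
    ∀ i, 0 ≤ vtx p π k i ∧ vtx p π k i ≤ r i - 1 := by
  intro i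
  unfold vtx
  obtain ⟨h1, h2⟩ := hp i
  split <;> constructor <;> linarith

lemma vtx_self (p : Fin d → ℤ) (π : Equiv.Perm (Fin d)) (k : Fin (d+1)) (i : Fin d)
    (h : ((π.symm i : ℕ) < (k : ℕ))) : vtx p π k i = p i + 1 := by
  unfold vtx; rw [if_pos h]

lemma vtx_self' (p : Fin d → ℤ) (π : Equiv.Perm (Fin d)) (k : Fin (d+1)) (i : Fin d)
    (h : ¬((π.symm i : ℕ) < (k : ℕ))) : vtx p π k i = p i := by
  unfold vtx; rw [if_neg h]; ring

lemma no_door_zero {r : Fin (d+1) → ℤ} (hr : ∀ i, 2 ≤ r i)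
    {φ : (Fin (d+1) → ℤ) → Fin (d+2)} (hv : Valid r φ)
    {p : Fin (d+1) → ℤ} (hp : ∀ i, 0 ≤ p i ∧ p i ≤ r i - 2) (π : Equiv.Perm (Fin (d+1)))
    (htop : p (π 0) = r (π 0) - 2) :
    ¬ Door φ p π 0 := by
  intro hD
  obtain ⟨k, hk, hc⟩ := hD (π 0)
  set v := vtx p π k with hvdef
  have hgrid : ∀ i, 0 ≤ v i ∧ v i ≤ r i - 1 := vtx_grid hp π k
  have hvtop : v (π 0) = r (π 0) - 1 := by
    rw [hvdef, vtx_self p π k (π 0) ?_, htop]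
    · ring
    · rw [Equiv.symm_apply_apply]
      simp only [Fin.val_zero]
      have : (k:ℕ) ≠ 0 := fun h => hk (Fin.ext h)
      omega
  have hcv : φ v = Fin.castSucc (π 0) := hc
  by_cases hZ : (Finset.univ.filter (fun i => v i = 0)).Nonempty
  · have h1 := (hv v hgrid).1 hZ
    rw [hcv] at h1
    have hmax : (Finset.univ.filter (fun i => v i = 0)).max' hZ = π 0 :=
      (Fin.castSucc_injective _ h1).symm
    have := Finset.max'_mem _ hZ
    rw [hmax, Finset.mem_filter] at this
    have h0 : v (π 0) = 0 := this.2
    have := hr (π 0)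
    omega
  · rw [Finset.not_nonempty_iff_eq_empty, Finset.filter_eq_empty_iff] at hZ
    have h2 := (hv v hgrid).2 (fun i => hZ (Finset.mem_univ i)) ⟨π 0, hvtop⟩
    rw [hcv] at h2
    exact absurd h2 (Fin.castSucc_lt_last _).ne

lemma no_door_last {r : Fin (d+1) → ℤ} (hr : ∀ i, 2 ≤ r i)
    {φ : (Fin (d+1) → ℤ) → Fin (d+2)} (hv : Valid r φ)
    {p : Fin (d+1) → ℤ} (hp : ∀ i, 0 ≤ p i ∧ p i ≤ r i - 2) (π : Equiv.Perm (Fin (d+1)))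
    (hπ : π (Fin.last d) ≠ 0) (hp0 : p (π (Fin.last d)) = 0) :
    ¬ Door φ p π (Fin.last (d+1)) := by
  intro hD
  obtain ⟨k, hk, hc⟩ := hD 0
  set v := vtx p π k with hvdef
  have hgrid : ∀ i, 0 ≤ v i ∧ v i ≤ r i - 1 := vtx_grid hp π k
  have hv0 : v (π (Fin.last d)) = 0 := by
    rw [hvdef, vtx_self' p π k (π (Fin.last d)) ?_, hp0]
    rw [Equiv.symm_apply_apply]
    simp only [Fin.val_last]
    have : (k:ℕ) ≠ d + 1 := fun h => hk (Fin.ext (by simp [h]))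
    have := k.isLt
    omega
  have hZ : (Finset.univ.filter (fun i => v i = 0)).Nonempty :=
    ⟨π (Fin.last d), Finset.mem_filter.2 ⟨Finset.mem_univ _, hv0⟩⟩
  have h1 := (hv v hgrid).1 hZ
  have hcv : φ v = Fin.castSucc 0 := hc
  rw [hcv] at h1
  have hmax : (Finset.univ.filter (fun i => v i = 0)).max' hZ = 0 :=
    (Fin.castSucc_injective _ h1).symm
  have hmem : π (Fin.last d) ∈ Finset.univ.filter (fun i => v i = 0) :=
    Finset.mem_filter.2 ⟨Finset.mem_univ _, hv0⟩
  have hle := Finset.le_max' _ _ hmem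
  rw [hmax, Fin.le_zero_iff] at hle
  exact hπ hle

end Panch

namespace Panch
variable {d : ℕ}

def ρ : Fin (d+2) → Fin (d+1) :=
  fun c => if (c:ℕ) = 0 then Fin.last d else ⟨(c:ℕ) - 1, by omega⟩

def χ (φ : (Fin (d+1) → ℤ) → Fin (d+2)) : (Fin d → ℤ) → Fin (d+1) :=
  fun w => ρ (φ (cons0 w))

lemma rhoCast_injective : Function.Injective (fun c : Fin (d+1) => ρ (Fin.castSucc c)) := by
  intro a b h
  simp only [ρ, Fin.coe_castSucc] at h
  split_ifs at h with h1 h2 h2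
  · exact Fin.ext (h1.trans h2.symm)
  · have := congrArg Fin.val h
    simp only [Fin.val_last] at this
    have hb := b.isLt
    omega
  · have := congrArg Fin.val h
    simp only [Fin.val_last] at this
    have ha := a.isLt
    omega
  · have := congrArg Fin.val h
    simp only at this
    have ha := a.isLt
    have hb := b.isLt
    apply Fin.ext
    omega

lemma rhoCast_surjective : Function.Surjective (fun c : Fin (d+1) => ρ (Fin.castSucc c)) :=
  Finite.injective_iff_surjective.1 rhoCast_injective

def up (σ : Equiv.Perm (Fin d)) : Equiv.Perm (Fin (d+1)) :=
  finSuccEquivLast.trans ((Equiv.optionCongr σ).trans (finSuccEquiv d).symm)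

lemma up_castSucc (σ : Equiv.Perm (Fin d)) (i : Fin d) : up σ i.castSucc = (σ i).succ := by
  simp [up, Equiv.optionCongr_apply]

lemma up_last (σ : Equiv.Perm (Fin d)) : up σ (Fin.last d) = 0 := by
  simp [up, Equiv.optionCongr_apply]

lemma up_injective : Function.Injective (up (d := d)) := by
  intro σ τ h
  ext i
  have := congrArg (fun π : Equiv.Perm (Fin (d+1)) => π i.castSucc) h
  simp only [up_castSucc] at this
  exact congrArg Fin.val (Fin.succ_injective _ this)

lemma up_surj {π : Equiv.Perm (Fin (d+1))} (h : π (Fin.last d) = 0) : ∃ σ, up σ = π := by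
  set e : Option (Fin d) ≃ Option (Fin d) :=
    finSuccEquivLast.symm.trans (π.trans (finSuccEquiv d)) with he
  have hnone : e none = none := by
    simp [he, h, finSuccEquiv_zero]
  refine ⟨e.removeNone, ?_⟩
  ext x
  apply congrArg Fin.val
  induction x using Fin.lastCases with
  | last => rw [up_last, h]
  | cast i =>
    rw [up_castSucc]
    have hne : e (some i) ≠ none := by
      intro hx
      exact (by simp : (some i : Option (Fin d)) ≠ none) (e.injective (hx.trans hnone.symm))
    have hsome : ∃ x', e (some i) = some x' := Option.ne_none_iff_exists'.1 hne
    have h1 := Equiv.removeNone_some e hsome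
    have h2 : e (some i) = finSuccEquiv d (π i.castSucc) := by
      simp [he]
    rw [h2] at h1
    have h3 : (finSuccEquiv d).symm (some (e.removeNone i)) = π i.castSucc := by
      rw [h1, Equiv.symm_apply_apply]
    rw [finSuccEquiv_symm_some] at h3
    exact h3

lemma upSymm_zero (σ : Equiv.Perm (Fin d)) : (up σ).symm 0 = Fin.last d := by
  rw [Equiv.symm_apply_eq, up_last]

lemma upSymm_succ (σ : Equiv.Perm (Fin d)) (i : Fin d) :
    (up σ).symm i.succ = (σ.symm i).castSucc := by
  rw [Equiv.symm_apply_eq, up_castSucc, Equiv.apply_symm_apply]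

lemma vtx_cons (q : Fin d → ℤ) (σ : Equiv.Perm (Fin d)) (k : Fin (d+1)) :
    vtx (cons0 q) (up σ) k.castSucc = cons0 (vtx q σ k) := by
  funext i
  induction i using Fin.cases with
  | zero =>
    unfold vtx
    rw [upSymm_zero]
    simp only [cons0_zero, Fin.val_last, Fin.coe_castSucc]
    rw [if_neg (by have := k.isLt; omega)]
    ring
  | succ i =>
    unfold vtx
    rw [upSymm_succ]
    simp only [cons0_succ, Fin.coe_castSucc]

end Panch

namespace Panch
variable {d : ℕ}

lemma cons_grid {r : Fin (d+1) → ℤ} (hr : ∀ i, 2 ≤ r i) {w : Fin d → ℤ}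
    (hw : ∀ i, 0 ≤ w i ∧ w i ≤ r i.succ - 1) :
    ∀ i, 0 ≤ cons0 w i ∧ cons0 w i ≤ r i - 1 := by
  intro i
  induction i using Fin.cases with
  | zero => simp only [cons0_zero]; have := hr 0; omega
  | succ i => simp only [cons0_succ]; exact hw i

/-- The color of a face point `(0, w)` under a valid coloring is `castSucc` of something,
namely the max of the zero set. -/
lemma face_color {r : Fin (d+1) → ℤ} (hr : ∀ i, 2 ≤ r i)
    {φ : (Fin (d+1) → ℤ) → Fin (d+2)} (hv : Valid r φ) {w : Fin d → ℤ}
    (hw : ∀ i, 0 ≤ w i ∧ w i ≤ r i.succ - 1) :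
    ∃ h : (Finset.univ.filter (fun i => cons0 w i = 0)).Nonempty,
      φ (cons0 w) =
        Fin.castSucc ((Finset.univ.filter (fun i => cons0 w i = 0)).max' h) := by
  have hZ : (Finset.univ.filter (fun i => cons0 w i = 0)).Nonempty :=
    ⟨0, Finset.mem_filter.2 ⟨Finset.mem_univ _, cons0_zero _⟩⟩
  exact ⟨hZ, (hv _ (cons_grid hr hw)).1 hZ⟩

lemma chi_valid {r : Fin (d+1) → ℤ} (hr : ∀ i, 2 ≤ r i)
    {φ : (Fin (d+1) → ℤ) → Fin (d+2)} (hv : Valid r φ) :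
    Valid (fun i : Fin d => r i.succ) (χ φ) := by
  intro w hw
  obtain ⟨hZ, hφ⟩ := face_color hr hv hw
  set Z := Finset.univ.filter (fun i => cons0 w i = 0) with hZdef
  constructor
  · intro hZw
    set Zw := Finset.univ.filter (fun i => w i = 0) with hZwdef
    have hmem : ((Zw.max' hZw).succ : Fin (d+1)) ∈ Z := by
      rw [hZdef, Finset.mem_filter]
      refine ⟨Finset.mem_univ _, ?_⟩
      rw [cons0_succ]
      exact (Finset.mem_filter.1 (Finset.max'_mem Zw hZw)).2
    have hle : Z.max' hZ ≤ (Zw.max' hZw).succ := by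
      apply Finset.max'_le
      intro y hy
      rw [hZdef, Finset.mem_filter] at hy
      induction y using Fin.cases with
      | zero => exact Fin.zero_le _
      | succ y =>
        rw [cons0_succ] at hy
        have : y ∈ Zw := Finset.mem_filter.2 ⟨Finset.mem_univ _, hy.2⟩
        exact Fin.succ_le_succ_iff.2 (Finset.le_max' Zw y this)
    have hge : (Zw.max' hZw).succ ≤ Z.max' hZ := Finset.le_max' Z _ hmem
    have hMeq : Z.max' hZ = (Zw.max' hZw).succ := le_antisymm hle hge
    show ρ (φ (cons0 w)) = Fin.castSucc (Zw.max' hZw)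
    rw [hφ, hMeq]
    apply Fin.ext
    simp only [ρ, Fin.coe_castSucc, Fin.val_succ]
    rw [if_neg (by omega)]
    simp
  · intro hnz _
    have hM : Z.max' hZ = 0 := by
      apply le_antisymm _ (Fin.zero_le _)
      apply Finset.max'_le
      intro y hy
      rw [hZdef, Finset.mem_filter] at hy
      induction y using Fin.cases with
      | zero => exact le_refl _
      | succ y =>
        have h2 : w y = 0 := by have := hy.2; rwa [cons0_succ] at this
        exact absurd h2 (hnz y)
    show ρ (φ (cons0 w)) = Fin.last d
    rw [hφ, hM]
    simp [ρ]

/-- Door at the last facet of a lifted simplex ↔ panchromaticity for χ. -/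
lemma door_last_iff_pan {r : Fin (d+1) → ℤ} (hr : ∀ i, 2 ≤ r i)
    {φ : (Fin (d+1) → ℤ) → Fin (d+2)} (hv : Valid r φ)
    {q : Fin d → ℤ} (hq : ∀ i, 0 ≤ q i ∧ q i ≤ r i.succ - 2) (σ : Equiv.Perm (Fin d)) :
    Door φ (cons0 q) (up σ) (Fin.last (d+1)) ↔ Pan (χ φ) q σ := by
  have hwgrid : ∀ k : Fin (d+1), ∀ i, 0 ≤ vtx q σ k i ∧ vtx q σ k i ≤ r i.succ - 1 :=
    fun k => vtx_grid hq σ k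
  -- each facet vertex's φ-color is castSucc of something
  have hcol : ∀ k : Fin (d+1), ∃ c : Fin (d+1),
      φ (vtx (cons0 q) (up σ) k.castSucc) = Fin.castSucc c ∧
      χ φ (vtx q σ k) = ρ (Fin.castSucc c) := by
    intro k
    obtain ⟨hZ, hφ⟩ := face_color hr hv (hwgrid k)
    refine ⟨(Finset.univ.filter (fun i => cons0 (vtx q σ k) i = 0)).max' hZ, ?_, ?_⟩
    · rw [vtx_cons]; exact hφ
    · show ρ (φ (cons0 (vtx q σ k))) = _
      rw [hφ]
  constructor
  · intro hD c'
    obtain ⟨c, hc⟩ := rhoCast_surjective c'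
    obtain ⟨k, hk, hφk⟩ := hD c
    rcases Fin.eq_castSucc_or_eq_last k with ⟨k₀, rfl⟩ | rfl
    · refine ⟨k₀, ?_⟩
      obtain ⟨c₀, h1, h2⟩ := hcol k₀
      have : Fin.castSucc c₀ = Fin.castSucc c := by rw [← h1]; exact hφk
      have hcc : c₀ = c := Fin.castSucc_injective _ this
      show χ φ (vtx q σ k₀) = c'
      rw [h2, hcc]
      exact hc
    · exact absurd rfl hk
  · intro hP c
    obtain ⟨k, hk⟩ := hP (ρ (Fin.castSucc c))
    obtain ⟨c₀, h1, h2⟩ := hcol k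
    have : ρ (Fin.castSucc c₀) = ρ (Fin.castSucc c) := by
      rw [← h2]; exact hk
    have hcc : c₀ = c := rhoCast_injective this
    exact ⟨k.castSucc, (Fin.castSucc_lt_last k).ne,
      by show φ (vtx (cons0 q) (up σ) k.castSucc) = _; rw [h1, hcc]⟩

end Panch

namespace Panch
variable {d : ℕ}

lemma finRotate_symm_zero : (finRotate (d+1)).symm 0 = Fin.last d := by
  rw [Equiv.symm_apply_eq, finRotate_succ_apply, Fin.last_add_one]

lemma rotate_cancel (π : Equiv.Perm (Fin (d+1))) :
    (finRotate (d+1)).symm.trans ((finRotate (d+1)).trans π) = π := by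
  rw [← Equiv.trans_assoc, Equiv.symm_trans_self, Equiv.refl_trans]

lemma rotate_cancel' (π : Equiv.Perm (Fin (d+1))) :
    (finRotate (d+1)).trans ((finRotate (d+1)).symm.trans π) = π := by
  rw [← Equiv.trans_assoc, Equiv.self_trans_symm, Equiv.refl_trans]

/-- the pivot (reflection) map on flags -/
def pivot (t : ((Fin (d+1) → ℤ) × Equiv.Perm (Fin (d+1))) × Fin (d+2)) :
    ((Fin (d+1) → ℤ) × Equiv.Perm (Fin (d+1))) × Fin (d+2) :=
  if t.2 = 0 then
    ((pδ t.1.1 (t.1.2 0), (finRotate (d+1)).trans t.1.2), Fin.last (d+1))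
  else if h2 : t.2 = Fin.last (d+1) then
    ((fun i => t.1.1 i - if i = t.1.2 (Fin.last d) then 1 else 0,
      (finRotate (d+1)).symm.trans t.1.2), 0)
  else
    ((t.1.1, (Equiv.swap
        (⟨(t.2:ℕ)-1, by have := t.2.isLt; omega⟩ : Fin (d+1))
        (⟨(t.2:ℕ), by
          have h3 : (t.2:ℕ) ≠ d+1 := fun hh => h2 (Fin.ext (by simp [hh]))
          have := t.2.isLt; omega⟩ : Fin (d+1))).trans t.1.2), t.2)

end Panch

namespace Panch
variable {d : ℕ}

lemma rot_last (π : Equiv.Perm (Fin (d+1))) :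
    ((finRotate (d+1)).trans π) (Fin.last d) = π 0 := by
  rw [Equiv.trans_apply, finRotate_succ_apply, Fin.last_add_one]

lemma rotSymm_zero (π : Equiv.Perm (Fin (d+1))) :
    ((finRotate (d+1)).symm.trans π) 0 = π (Fin.last d) := by
  rw [Equiv.trans_apply, finRotate_symm_zero]

lemma pivot_props {r : Fin (d+1) → ℤ} (hr : ∀ i, 2 ≤ r i)
    {φ : (Fin (d+1) → ℤ) → Fin (d+2)} (hv : Valid r φ)
    (t : ((Fin (d+1) → ℤ) × Equiv.Perm (Fin (d+1))) × Fin (d+2))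
    (hp : ∀ i, 0 ≤ t.1.1 i ∧ t.1.1 i ≤ r i - 2)
    (hD : Door φ t.1.1 t.1.2 t.2)
    (hBd : ¬(t.2 = Fin.last (d+1) ∧ t.1.2 (Fin.last d) = 0 ∧ t.1.1 0 = 0)) :
    (∀ i, 0 ≤ (pivot t).1.1 i ∧ (pivot t).1.1 i ≤ r i - 2) ∧
    Door φ (pivot t).1.1 (pivot t).1.2 (pivot t).2 ∧
    ¬((pivot t).2 = Fin.last (d+1) ∧ (pivot t).1.2 (Fin.last d) = 0 ∧ (pivot t).1.1 0 = 0) ∧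
    pivot (pivot t) = t ∧ pivot t ≠ t := by
  obtain ⟨⟨p, π⟩, j⟩ := t
  simp only at hp hD hBd
  have hlast0 : (Fin.last (d+1) : Fin (d+2)) ≠ 0 := by
    intro h
    have := congrArg Fin.val h
    simp at this
  by_cases h0 : j = 0
  · subst h0
    have hpiv : pivot ((p, π), (0 : Fin (d+2)))
        = ((pδ p (π 0), (finRotate (d+1)).trans π), Fin.last (d+1)) := by
      dsimp only [pivot]
      rw [if_pos rfl]
    have htop : p (π 0) ≤ r (π 0) - 3 := by
      rcases lt_or_eq_of_le (hp (π 0)).2 with h | h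
      · omega
      · exact absurd hD (no_door_zero hr hv hp π h)
    rw [hpiv]
    refine ⟨?_, ?_, ?_, ?_, ?_⟩
    · intro i
      simp only [pδ]
      rcases eq_or_ne i (π 0) with h | h
      · rw [if_pos h]; subst h
        have h1 := (hp (π 0)).1
        constructor <;> omega
      · rw [if_neg h]; have := hp i; constructor <;> omega
    · exact (door_rot φ p π).mp hD
    · rintro ⟨-, hπl, hp0⟩
      rw [rot_last] at hπl
      simp [pδ, hπl] at hp0
      have := (hp 0).1
      omega
    · have hpiv2 : pivot ((pδ p (π 0), (finRotate (d+1)).trans π), Fin.last (d+1))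
          = ((p, π), (0 : Fin (d+2))) := by
        dsimp only [pivot]
        rw [if_neg hlast0, dif_pos rfl]
        refine Prod.ext (Prod.ext ?_ ?_) rfl
        · funext i
          simp only [pδ, rot_last]
          rcases eq_or_ne i (π 0) with h | h
          · rw [if_pos h]; ring
          · rw [if_neg h]; ring
        · exact rotate_cancel π
      rw [hpiv2]
    · intro h
      exact hlast0 (congrArg Prod.snd h)
  · by_cases hl : j = Fin.last (d+1)
    · subst hl
      set p' : Fin (d+1) → ℤ := fun i => p i - if i = π (Fin.last d) then 1 else 0 with hp'
      set π' : Equiv.Perm (Fin (d+1)) := (finRotate (d+1)).symm.trans π with hπ'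
      have hpiv : pivot ((p, π), Fin.last (d+1)) = ((p', π'), (0 : Fin (d+2))) := by
        dsimp only [pivot]
        rw [if_neg hlast0, dif_pos rfl]
      have hpos : 1 ≤ p (π (Fin.last d)) := by
        by_cases hπ0 : π (Fin.last d) = 0
        · have hne : p 0 ≠ 0 := fun hz => hBd ⟨rfl, hπ0, hz⟩
          rw [hπ0]
          have := (hp 0).1
          omega
        · by_cases hz : p (π (Fin.last d)) = 0
          · exact absurd hD (no_door_last hr hv hp π hπ0 hz)
          · have := (hp (π (Fin.last d))).1
            omega
      have hπeq : (finRotate (d+1)).trans π' = π := rotate_cancel' π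
      have hpeq : pδ p' (π' 0) = p := by
        funext i
        simp only [pδ, hp', hπ', rotSymm_zero]
        rcases eq_or_ne i (π (Fin.last d)) with h | h
        · rw [if_pos h]; ring
        · rw [if_neg h]; ring
      rw [hpiv]
      refine ⟨?_, ?_, ?_, ?_, ?_⟩
      · intro i
        simp only [hp']
        rcases eq_or_ne i (π (Fin.last d)) with h | h
        · rw [if_pos h]; subst h
          have := (hp (π (Fin.last d))).2
          constructor <;> omega
        · rw [if_neg h]; have := hp i; constructor <;> omega
      · refine (door_rot φ p' π').mpr ?_
        rw [hpeq, hπeq]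
        exact hD
      · rintro ⟨h, -⟩
        exact hlast0 h.symm
      · have hpiv2 : pivot ((p', π'), (0 : Fin (d+2))) = ((p, π), Fin.last (d+1)) := by
          dsimp only [pivot]
          rw [if_pos rfl]
          refine Prod.ext (Prod.ext ?_ ?_) rfl
          · exact hpeq
          · exact hπeq
        rw [hpiv2]
      · intro h
        exact hlast0 (congrArg Prod.snd h).symm
    · -- middle case
      have hj1 : 1 ≤ (j:ℕ) := by
        have : (j:ℕ) ≠ 0 := fun hh => h0 (Fin.ext hh)
        omega
      have hjd : (j:ℕ) ≤ d := by
        have : (j:ℕ) ≠ d+1 := fun hh => hl (Fin.ext (by simp [hh]))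
        have := j.isLt
        omega
      set a : Fin (d+1) := ⟨(j:ℕ)-1, by omega⟩ with ha
      set b : Fin (d+1) := ⟨(j:ℕ), by omega⟩ with hb
      have hab : (a:ℕ) + 1 = (b:ℕ) := by simp [ha, hb]; omega
      have hjb : (j:ℕ) = (b:ℕ) := rfl
      have hpiv : ∀ ρ : Equiv.Perm (Fin (d+1)), pivot ((p, ρ), j)
          = ((p, (Equiv.swap a b).trans ρ), j) := by
        intro ρ
        dsimp only [pivot]
        rw [if_neg h0, dif_neg hl]
      rw [hpiv π]
      refine ⟨hp, ?_, ?_, ?_, ?_⟩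
      · exact (door_swap φ p π a b hab j hjb).mpr hD
      · rintro ⟨h, -⟩
        exact hl h
      · rw [hpiv ((Equiv.swap a b).trans π)]
        refine Prod.ext (Prod.ext rfl ?_) rfl
        rw [← Equiv.trans_assoc, Equiv.swap_swap, Equiv.refl_trans]
      · intro h
        have hππ : (Equiv.swap a b).trans π = π := by
          have := congrArg (fun t => t.1.2) h
          exact this
        have : π (Equiv.swap a b a) = π a := by rw [← Equiv.trans_apply, hππ]
        rw [Equiv.swap_apply_left] at this
        have hba : b = a := π.injective this
        have := congrArg Fin.val hba
        simp [ha, hb] at this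
        omega

end Panch

namespace Panch

lemma cast_one_iff (n : ℕ) : (n : ZMod 2) = 1 ↔ n % 2 = 1 := by
  have := ZMod.natCast_eq_natCast_iff n 1 2
  rw [Nat.cast_one] at this
  rw [this]
  unfold Nat.ModEq
  norm_num

theorem key : ∀ (d : ℕ) (r : Fin d → ℤ), (∀ i, 2 ≤ r i) →
    ∀ φ : (Fin d → ℤ) → Fin (d+1), Valid r φ →
    ((Finset.Icc (0 : Fin d → ℤ) (fun i => r i - 2) ×ˢ
        (Finset.univ : Finset (Equiv.Perm (Fin d)))).filter
      (fun s => Pan φ s.1 s.2)).card % 2 = 1 := by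
  intro d
  induction d with
  | zero =>
    intro r hr φ hv
    have huniq : ∀ x y : (Fin 0 → ℤ) × Equiv.Perm (Fin 0), x = y := by
      intro x y
      apply Prod.ext
      · funext i; exact i.elim0
      · apply Equiv.ext; intro i; exact i.elim0
    have hmem : ((fun _ => (0:ℤ)), 1) ∈ (Finset.Icc (0 : Fin 0 → ℤ) (fun i => r i - 2) ×ˢ
        (Finset.univ : Finset (Equiv.Perm (Fin 0)))).filter (fun s => Pan φ s.1 s.2) := by
      rw [Finset.mem_filter, Finset.mem_product]
      refine ⟨⟨?_, Finset.mem_univ _⟩, ?_⟩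
      · rw [Finset.mem_Icc]
        constructor
        · intro i; exact i.elim0
        · intro i; exact i.elim0
      · intro c
        haveI : Subsingleton (Fin (0+1)) := ⟨fun a b => Fin.ext (by omega)⟩
        exact ⟨0, Subsingleton.elim _ _⟩
    have hcard : ((Finset.Icc (0 : Fin 0 → ℤ) (fun i => r i - 2) ×ˢ
        (Finset.univ : Finset (Equiv.Perm (Fin 0)))).filter (fun s => Pan φ s.1 s.2)).card = 1 := by
      apply Finset.card_eq_one.2
      refine ⟨((fun _ => (0:ℤ)), 1), ?_⟩
      ext x
      simp only [Finset.mem_singleton]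
      constructor
      · intro _; exact huniq _ _
      · intro h; rw [h]; exact hmem
    rw [hcard]
  | succ d IH =>
    intro r hr φ hv
    have hIH := IH (fun i => r i.succ) (fun i => hr i.succ) (χ φ) (chi_valid hr hv)
    set Ssm := (Finset.Icc (0 : Fin d → ℤ) (fun i => (fun i => r i.succ) i - 2) ×ˢ
        (Finset.univ : Finset (Equiv.Perm (Fin d)))).filter
        (fun s => Pan (χ φ) s.1 s.2) with hSsm
    set S := Finset.Icc (0 : Fin (d+1) → ℤ) (fun i => r i - 2) ×ˢ
        (Finset.univ : Finset (Equiv.Perm (Fin (d+1)))) with hS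
    set T := (S ×ˢ (Finset.univ : Finset (Fin (d+2)))).filter
        (fun t => Door φ t.1.1 t.1.2 t.2) with hT
    set Bd : (((Fin (d+1) → ℤ) × Equiv.Perm (Fin (d+1))) × Fin (d+2)) → Prop :=
        fun t => t.2 = Fin.last (d+1) ∧ t.1.2 (Fin.last d) = 0 ∧ t.1.1 0 = 0 with hBd
    have hTmem : ∀ t, t ∈ T ↔
        ((∀ i, 0 ≤ t.1.1 i ∧ t.1.1 i ≤ r i - 2) ∧ Door φ t.1.1 t.1.2 t.2) := by
      intro t
      rw [hT, Finset.mem_filter, Finset.mem_product, Finset.mem_product]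
      constructor
      · rintro ⟨⟨⟨h1, -⟩, -⟩, h2⟩
        exact ⟨mem_base.1 h1, h2⟩
      · rintro ⟨h1, h2⟩
        exact ⟨⟨⟨mem_base.2 h1, Finset.mem_univ _⟩, Finset.mem_univ _⟩, h2⟩
    -- step 1 : parity of panchromatic count equals parity of flag count
    have h1 : ((S.filter (fun s => Pan φ s.1 s.2)).card : ZMod 2) = (T.card : ZMod 2) := by
      rw [Finset.card_filter, hT, Finset.card_filter, Nat.cast_sum, Nat.cast_sum]
      rw [show (∑ t ∈ S ×ˢ (Finset.univ : Finset (Fin (d+2))),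
            ((if Door φ t.1.1 t.1.2 t.2 then (1:ℕ) else 0 : ℕ) : ZMod 2))
          = ∑ s ∈ S, ∑ j ∈ (Finset.univ : Finset (Fin (d+2))),
            ((if Door φ (s, j).1.1 (s, j).1.2 (s, j).2 then (1:ℕ) else 0 : ℕ) : ZMod 2)
        from Finset.sum_product _ _ _]
      apply Finset.sum_congr rfl
      intro s _
      have hC := card_doorF (fun k => φ (vtx s.1 s.2 k))
      rw [Finset.card_filter, Nat.cast_sum] at hC
      have e1 : (∑ j : Fin (d+2), (((if DoorF (fun k => φ (vtx s.1 s.2 k)) j then 1 else 0 : ℕ)) : ZMod 2))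
          = ∑ j : Fin (d+2), (((if Door φ s.1 s.2 j then 1 else 0 : ℕ)) : ZMod 2) := by
        apply Finset.sum_congr rfl
        intro j _
        congr 1
      have e2 : (if Function.Surjective (fun k => φ (vtx s.1 s.2 k)) then (1:ZMod 2) else 0)
          = ((if Pan φ s.1 s.2 then 1 else 0 : ℕ) : ZMod 2) := by
        unfold Pan
        split_ifs <;> simp
      rw [e1, e2] at hC
      exact hC.symm
    -- step 2 : split the flags along the boundary predicate
    have hsplit : (T.card : ZMod 2)
        = ((T.filter Bd).card : ZMod 2) + ((T.filter (fun t => ¬ Bd t)).card : ZMod 2) := by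
      rw [← Nat.cast_add, Finset.card_filter_add_card_filter_not]
    -- step 3 : interior flags cancel in pairs
    have hint : ((T.filter (fun t => ¬ Bd t)).card : ZMod 2) = 0 := by
      rw [Finset.card_eq_sum_ones, Nat.cast_sum]
      have hrw : ∀ x ∈ T.filter (fun t => ¬ Bd t), ((1:ℕ) : ZMod 2) = (1:ZMod 2) := by
        intro x _; norm_num
      rw [Finset.sum_congr rfl hrw]
      have hfacts : ∀ t ∈ T.filter (fun t => ¬ Bd t),
          (∀ i, 0 ≤ t.1.1 i ∧ t.1.1 i ≤ r i - 2) ∧ Door φ t.1.1 t.1.2 t.2 ∧ ¬ Bd t := by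
        intro t ht
        rw [Finset.mem_filter] at ht
        obtain ⟨h1, h2⟩ := ht
        rw [hTmem] at h1
        exact ⟨h1.1, h1.2, h2⟩
      refine Finset.sum_involution (fun t _ => pivot t) (fun t ht => by decide) ?_ ?_ ?_
      · intro t ht _
        obtain ⟨ha, hb, hc⟩ := hfacts t ht
        exact (pivot_props hr hv t ha hb hc).2.2.2.2
      · intro t ht
        obtain ⟨ha, hb, hc⟩ := hfacts t ht
        obtain ⟨g1, g2, g3, -, -⟩ := pivot_props hr hv t ha hb hc
        rw [Finset.mem_filter]
        exact ⟨(hTmem _).2 ⟨g1, g2⟩, g3⟩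
      · intro t ht
        obtain ⟨ha, hb, hc⟩ := hfacts t ht
        exact (pivot_props hr hv t ha hb hc).2.2.2.1
    -- step 4 : boundary flags are in bijection with small panchromatic simplices
    have hbd : (T.filter Bd).card = Ssm.card := by
      symm
      apply Finset.card_bij (fun s _ => ((cons0 s.1, up s.2), Fin.last (d+1)))
      · -- maps into T.filter Bd
        intro s hs
        rw [hSsm, Finset.mem_filter, Finset.mem_product, Finset.mem_Icc] at hs
        obtain ⟨⟨⟨hq1, hq2⟩, -⟩, hPan⟩ := hs
        have hq : ∀ i, 0 ≤ s.1 i ∧ s.1 i ≤ r i.succ - 2 := fun i => ⟨hq1 i, hq2 i⟩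
        rw [Finset.mem_filter]
        constructor
        · rw [hTmem]
          constructor
          · intro i
            induction i using Fin.cases with
            | zero =>
              simp only [cons0_zero]
              have := hr 0
              constructor <;> omega
            | succ i =>
              simp only [cons0_succ]
              exact hq i
          · exact (door_last_iff_pan hr hv hq s.2).mpr hPan
        · exact ⟨rfl, up_last s.2, cons0_zero s.1⟩
      · -- injective
        intro s1 hs1 s2 hs2 heq
        have h1 : cons0 s1.1 = cons0 s2.1 := congrArg (fun t => t.1.1) heq
        have h2 : up s1.2 = up s2.2 := congrArg (fun t => t.1.2) heq
        apply Prod.ext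
        · funext i
          have := congrArg (fun f => f i.succ) h1
          simpa using this
        · exact up_injective h2
      · -- surjective
        intro t ht
        rw [Finset.mem_filter] at ht
        obtain ⟨hmem, hj, hπ, hp0⟩ := ht
        rw [hTmem] at hmem
        obtain ⟨hgrid, hdoor⟩ := hmem
        obtain ⟨σ, hσ⟩ := up_surj hπ
        set q : Fin d → ℤ := fun i => t.1.1 i.succ with hq
        have hcons : cons0 q = t.1.1 := by
          funext i
          induction i using Fin.cases with
          | zero => rw [cons0_zero, hp0]
          | succ i => rw [cons0_succ]
        have hqgrid : ∀ i, 0 ≤ q i ∧ q i ≤ r i.succ - 2 := fun i => hgrid i.succ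
        refine ⟨(q, σ), ?_, ?_⟩
        · rw [hSsm, Finset.mem_filter, Finset.mem_product, Finset.mem_Icc]
          refine ⟨⟨⟨fun i => (hqgrid i).1, fun i => (hqgrid i).2⟩, Finset.mem_univ _⟩, ?_⟩
          apply (door_last_iff_pan hr hv hqgrid σ).mp
          rw [hcons, hσ]
          rw [← hj]
          exact hdoor
        · rw [hcons, hσ, ← hj]
    have hcomb : ((S.filter (fun s => Pan φ s.1 s.2)).card : ZMod 2) = 1 := by
      rw [h1, hsplit, hint, add_zero, hbd]
      exact (cast_one_iff _).2 hIH
    exact (cast_one_iff _).1 hcomb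

lemma vtx_inj (p : Fin d → ℤ) (π : Equiv.Perm (Fin d)) {k k' : Fin (d+1)}
    (h : vtx p π k = vtx p π k') : k = k' := by
  have key : ∀ k k' : Fin (d+1), (k:ℕ) < (k':ℕ) → vtx p π k = vtx p π k' → False := by
    intro k k' hlt heq
    have hkd : (k:ℕ) < d := lt_of_lt_of_le hlt (Nat.lt_succ_iff.mp k'.isLt)
    set i := π ⟨(k:ℕ), hkd⟩ with hi
    have hthis := congrFun heq i
    unfold vtx at hthis
    have hsymm : π.symm i = ⟨(k:ℕ), hkd⟩ := by rw [hi, Equiv.symm_apply_apply]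
    rw [hsymm] at hthis
    have hval : ((⟨(k:ℕ), hkd⟩ : Fin d) : ℕ) = (k:ℕ) := rfl
    rw [hval, if_neg (lt_irrefl _), if_pos hlt] at hthis
    omega
  rcases Nat.lt_trichotomy (k:ℕ) (k':ℕ) with hlt | heq | hlt
  · exact (key k k' hlt h).elim
  · exact Fin.ext heq
  · exact (key k' k hlt h.symm).elim

end Panch

/-- Existence of a panchromatic simplex: any valid coloring of the hypergrid
`A = {q : 0 ≤ qᵢ ≤ rᵢ - 1}` with `d+1` colors admits an accommodated set of exactly
`d+1` points of the grid receiving the `d+1` distinct colors. -/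
theorem panchromatic_simplex_exists
    (d : ℕ) (hd : 1 ≤ d) (r : Fin d → ℤ) (hr : ∀ i, 2 ≤ r i)
    (φ : (Fin d → ℤ) → Fin (d + 1))
    (hvalid : ∀ p : Fin d → ℤ, (∀ i, 0 ≤ p i ∧ p i ≤ r i - 1) →
      (∀ h : (Finset.univ.filter (fun i => p i = 0)).Nonempty,
        φ p = Fin.castSucc ((Finset.univ.filter (fun i => p i = 0)).max' h)) ∧
      ((∀ i, p i ≠ 0) → (∃ i, p i = r i - 1) → φ p = Fin.last d)) :
    ∃ P : Finset (Fin d → ℤ),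
      P.card = d + 1 ∧
      (∀ q ∈ P, ∀ i, 0 ≤ q i ∧ q i ≤ r i - 1) ∧
      (∃ p : Fin d → ℤ, ∀ q ∈ P, ∀ i, q i = p i ∨ q i = p i + 1) ∧
      (∀ c : Fin (d + 1), ∃ q ∈ P, φ q = c) := by
  have hkey := Panch.key d r hr φ hvalid
  have h0 : ∀ (Fc : Finset ((Fin d → ℤ) × Equiv.Perm (Fin d))), Fc.card % 2 = 1 → Fc.Nonempty := by
    intro Fc h
    rw [← Finset.card_pos]
    omega
  obtain ⟨⟨p, π⟩, hmem⟩ := h0 _ hkey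
  rw [Finset.mem_filter, Finset.mem_product] at hmem
  obtain ⟨⟨hpB, -⟩, hPan⟩ := hmem
  have hp : ∀ i, 0 ≤ p i ∧ p i ≤ r i - 2 := Panch.mem_base.1 hpB
  refine ⟨Finset.image (fun k => Panch.vtx p π k) Finset.univ, ?_, ?_, ?_, ?_⟩
  · rw [Finset.card_image_of_injective _ (fun k k' h => Panch.vtx_inj p π h),
      Finset.card_univ, Fintype.card_fin]
  · intro q hq
    rw [Finset.mem_image] at hq
    obtain ⟨k, -, rfl⟩ := hq
    exact Panch.vtx_grid hp π k
  · refine ⟨p, ?_⟩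
    intro q hq i
    rw [Finset.mem_image] at hq
    obtain ⟨k, -, rfl⟩ := hq
    unfold Panch.vtx
    split
    · right; rfl
    · left; ring
  · intro c
    obtain ⟨k, hk⟩ := hPan c
    exact ⟨Panch.vtx p π k, Finset.mem_image.2 ⟨k, Finset.mem_univ _, rfl⟩, hk⟩
end

section
/- Nearly uniform capacities: fix an integer K ≥ 2, set N = 2K, M = 2K³ and ε = 1/K³. Let A* be the N×N block-diagonal matrix with K diagonal 2×2 blocks each filled with M, and B* = -A*. Suppose A, B are N×N matrices with all entries of A - A* and B - B* in [0,1]. Then for every 1.0-well-supported Nash equilibrium (x,y) of (A,B), and for every k ∈ {1,...,K}, the pair sums satisfy 1/K - ε ≤ x_{2k-1} + x_{2k} ≤ 1/K + ε and 1/K - ε ≤ y_{2k-1} + y_{2k} ≤ 1/K + ε. -/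
/-!
Write `X b`, `Y b` for the probability the two players put on the `b`-th pair of strategies.
Up to an error in `[0, 1]`, a row in pair `b` earns `M * Y b` and a column in pair `b` earns
`-M * X b`, so a 1-well-supported equilibrium of `(A, B)` induces a `2 / M = ε`-well-supported
equilibrium of the `K × K` matching pennies game with payoffs `Y` and `-X`. There, any block
with zero weight for one player lets the heaviest block (weight `≥ 1/K > ε`) trigger a cascade
that empties a block of weight `≥ 1/K`; so all weights are positive, the support conditions
force every two weights to be `ε`-close, and since they sum to one they lie within `ε` of `1/K`.
-/

open Finset

/-- One player's half of the `t`-well-supported Nash condition. -/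
def IsWellSupported {ι : Type*} (t : ℝ) (payoff p : ι → ℝ) : Prop :=
  ∀ j k, payoff j > payoff k + t → p k = 0

namespace IsWellSupported

variable {ι : Type*} {t : ℝ} {payoff p : ι → ℝ}

theorem of_mem_Icc {g : ι → ℝ} {s : ℝ} (h : IsWellSupported t payoff p)
    (hg : ∀ i, payoff i ∈ Set.Icc (g i) (g i + s)) : IsWellSupported (t + s) g p := by
  intro j k hjk
  have hj := hg j
  have hk := hg k
  exact h j k (by simp only [Set.mem_Icc] at hj hk; linarith)

theorem of_mul {c s : ℝ} (hc : 0 < c) (h : IsWellSupported s (fun i => c * payoff i) p)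
    (hs : s ≤ c * t) : IsWellSupported t payoff p :=
  fun j k hjk => h j k (by linarith [mul_lt_mul_of_pos_left hjk hc])

end IsWellSupported

theorem sum_mul_mem_Icc_of_sub_mem_Icc {ι : Type*} [Fintype ι] {a a' w : ι → ℝ} {δ : ℝ}
    (ha : ∀ i, a i - a' i ∈ Set.Icc 0 δ) (hw0 : ∀ i, 0 ≤ w i) (hw1 : ∑ i, w i = 1) :
    ∑ i, w i * a i ∈ Set.Icc (∑ i, w i * a' i) (∑ i, w i * a' i + δ) := by
  have hsplit : ∑ i, w i * a i = ∑ i, w i * a' i + ∑ i, w i * (a i - a' i) := by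
    rw [← sum_add_distrib]
    exact sum_congr rfl fun i _ => by ring
  have hnonneg : 0 ≤ ∑ i, w i * (a i - a' i) :=
    sum_nonneg fun i _ => mul_nonneg (hw0 i) (ha i).1
  have hle : ∑ i, w i * (a i - a' i) ≤ δ :=
    calc ∑ i, w i * (a i - a' i) ≤ ∑ i, w i * δ :=
          sum_le_sum fun i _ => mul_le_mul_of_nonneg_left (ha i).2 (hw0 i)
      _ = δ := by rw [← sum_mul, hw1, one_mul]
  rw [hsplit]
  constructor <;> linarith

theorem mem_Icc_inv_card_of_forall_le_add {ι : Type*} [Fintype ι] {f : ι → ℝ} {ε : ℝ}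
    (hf : ∑ i, f i = 1) (hε : ∀ i j, f i ≤ f j + ε) (i : ι) :
    f i ∈ Set.Icc (1 / Fintype.card ι - ε) (1 / Fintype.card ι + ε) := by
  have hn : (0 : ℝ) < Fintype.card ι := by
    have : Nonempty ι := ⟨i⟩
    exact_mod_cast Fintype.card_pos
  have hlower : 1 ≤ Fintype.card ι * f i + Fintype.card ι * ε := by
    simpa [hf, mul_add] using sum_le_card_nsmul univ f (f i + ε) fun j _ => hε j i
  have hupper : Fintype.card ι * f i - Fintype.card ι * ε ≤ 1 := by
    simpa [hf, mul_sub] using card_nsmul_le_sum univ f (f i - ε) fun j _ => by linarith [hε i j]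
  constructor
  · rw [sub_le_iff_le_add, div_le_iff₀ hn]; linarith
  · rw [← sub_le_iff_le_add, le_div_iff₀ hn]; linarith

theorem forall_le_add_of_isWellSupported {ι : Type*} [Fintype ι] {f g : ι → ℝ} {ε : ℝ}
    (hf : ∑ i, f i = 1) (hg : ∑ i, g i = 1) (hε : ε < 1 / Fintype.card ι)
    (hrow : IsWellSupported ε g f) (hcol : IsWellSupported ε (fun i => -f i) g) :
    (∀ i j, f i ≤ f j + ε) ∧ ∀ i j, g i ≤ g j + ε := by
  have : Nonempty ι :=
    univ_nonempty_iff.1 (nonempty_of_sum_ne_zero (s := univ) (by rw [hf]; norm_num))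
  have hn : (0 : ℝ) < Fintype.card ι := by exact_mod_cast Fintype.card_pos
  have exists_large : ∀ h : ι → ℝ, ∑ i, h i = 1 → ∃ m, 1 / Fintype.card ι ≤ h m := by
    intro h hh
    have hsum : ∑ _i : ι, 1 / (Fintype.card ι : ℝ) ≤ ∑ i, h i := by simp [hh, hn.ne']
    obtain ⟨m, -, hm⟩ := exists_le_of_sum_le univ_nonempty hsum
    exact ⟨m, hm⟩
  obtain ⟨mf, hmf⟩ := exists_large f hf
  obtain ⟨mg, hmg⟩ := exists_large g hg
  have hpos : 0 < 1 / (Fintype.card ι : ℝ) := by positivity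
  have hf_ne : ∀ c, f c ≠ 0 := by
    intro c hc
    have hg_mf : g mf = 0 := hcol c mf (by linarith)
    have hf_mf : f mf = 0 := hrow mg mf (by linarith)
    linarith
  have hg_ne : ∀ c, g c ≠ 0 := fun c hc => hf_ne c (hrow mg c (by linarith))
  exact ⟨fun i j => not_lt.1 fun h => hg_ne i (hcol j i (by linarith)),
    fun i j => not_lt.1 fun h => hf_ne j (hrow i j (by linarith))⟩

section Pairs

variable {K : ℕ}

def pairIndex (i : Fin (2 * K)) : Fin K := ⟨i / 2, by omega⟩

def pairSum (w : Fin (2 * K) → ℝ) (b : Fin K) : ℝ :=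
  w ⟨2 * b, by omega⟩ + w ⟨2 * b + 1, by omega⟩

theorem sum_filter_pairIndex_eq (w : Fin (2 * K) → ℝ) (b : Fin K) :
    ∑ i with pairIndex i = b, w i = pairSum w b := by
  have hfilter : ({i | pairIndex i = b} : Finset (Fin (2 * K))) =
      {⟨2 * b, by omega⟩, ⟨2 * b + 1, by omega⟩} := by
    ext i
    simp only [mem_filter, mem_univ, true_and, mem_insert, mem_singleton, pairIndex, Fin.ext_iff]
    omega
  rw [hfilter, sum_pair (by simp [Fin.ext_iff]), pairSum]

theorem sum_pairSum (w : Fin (2 * K) → ℝ) : ∑ b, pairSum w b = ∑ i, w i := by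
  simp_rw [← sum_filter_pairIndex_eq]
  exact sum_fiberwise univ pairIndex w

theorem sum_mul_ite_div_two_eq (w : Fin (2 * K) → ℝ) (M : ℝ) (j : Fin (2 * K)) :
    ∑ i, w i * (if (i : ℕ) / 2 = (j : ℕ) / 2 then M else 0) = M * pairSum w (pairIndex j) := by
  have hiff : ∀ i : Fin (2 * K), (i : ℕ) / 2 = (j : ℕ) / 2 ↔ pairIndex i = pairIndex j := by
    simp [pairIndex, Fin.ext_iff]
  simp_rw [mul_ite, mul_zero, hiff, ← sum_filter, ← sum_filter_pairIndex_eq, mul_sum, mul_comm]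

theorem IsWellSupported.of_comp_pairIndex {t : ℝ} {g : Fin K → ℝ} {u : Fin (2 * K) → ℝ}
    (h : IsWellSupported t (fun i => g (pairIndex i)) u) : IsWellSupported t g (pairSum u) := by
  intro b c hbc
  have hb : pairIndex (⟨2 * b, by omega⟩ : Fin (2 * K)) = b := Fin.ext (by simp [pairIndex])
  rw [← sum_filter_pairIndex_eq]
  exact sum_eq_zero fun k hk => h ⟨2 * b, by omega⟩ k (by simpa [hb, (mem_filter.1 hk).2])

end Pairs

section MatchingPennies

variable {K : ℕ} {Astar A B : Matrix (Fin (2 * K)) (Fin (2 * K)) ℝ} {x y : Fin (2 * K) → ℝ}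

theorem isWellSupported_pairSum_row (hK : 0 < K)
    (hAstar : ∀ i j : Fin (2 * K),
      Astar i j = if (i : ℕ) / 2 = (j : ℕ) / 2 then 2 * (K : ℝ) ^ 3 else 0)
    (hA : ∀ i j, A i j - Astar i j ∈ Set.Icc (0 : ℝ) 1) (hy : (∀ i, 0 ≤ y i) ∧ ∑ i, y i = 1)
    (hws : IsWellSupported 1 (fun j => ∑ i, A j i * y i) x) :
    IsWellSupported (1 / (K : ℝ) ^ 3) (pairSum y) (pairSum x) := by
  have hpayoff : ∀ j, ∑ i, A j i * y i ∈
      Set.Icc (2 * (K : ℝ) ^ 3 * pairSum y (pairIndex j))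
        (2 * (K : ℝ) ^ 3 * pairSum y (pairIndex j) + 1) := by
    intro j
    have h := sum_mul_mem_Icc_of_sub_mem_Icc (hA j) hy.1 hy.2
    simp_rw [hAstar, eq_comm (a := (j : ℕ) / 2), sum_mul_ite_div_two_eq] at h
    simpa only [mul_comm (A j _)] using h
  refine (hws.of_mem_Icc hpayoff).of_comp_pairIndex.of_mul (by positivity) ?_
  field_simp
  norm_num

theorem isWellSupported_pairSum_col (hK : 0 < K)
    (hAstar : ∀ i j : Fin (2 * K),
      Astar i j = if (i : ℕ) / 2 = (j : ℕ) / 2 then 2 * (K : ℝ) ^ 3 else 0)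
    (hB : ∀ i j, B i j - (-(Astar i j)) ∈ Set.Icc (0 : ℝ) 1) (hx : (∀ i, 0 ≤ x i) ∧ ∑ i, x i = 1)
    (hws : IsWellSupported 1 (fun j => ∑ i, x i * B i j) y) :
    IsWellSupported (1 / (K : ℝ) ^ 3) (fun b => -pairSum x b) (pairSum y) := by
  have hpayoff : ∀ j, ∑ i, x i * B i j ∈
      Set.Icc (2 * (K : ℝ) ^ 3 * -pairSum x (pairIndex j))
        (2 * (K : ℝ) ^ 3 * -pairSum x (pairIndex j) + 1) := by
    intro j
    have h := sum_mul_mem_Icc_of_sub_mem_Icc (fun i => hB i j) hx.1 hx.2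
    simpa only [mul_neg, sum_neg_distrib, hAstar, sum_mul_ite_div_two_eq] using h
  refine (hws.of_mem_Icc hpayoff).of_comp_pairIndex.of_mul (by positivity) ?_
  field_simp
  norm_num

end MatchingPennies

/-- Nearly uniform capacities: in any 1.0-well-supported Nash equilibrium of a game in
class 𝓛 (a `[0,1]` perturbation of the Generalized Matching Pennies prototype with
M = 2K³), each pair of consecutive strategy probabilities sums to `1/K ± 1/K³`. -/
theorem nearly_uniform_capacities (K : ℕ) (hK : 2 ≤ K)
    (Astar : Matrix (Fin (2 * K)) (Fin (2 * K)) ℝ)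
    (hAstar : ∀ i j : Fin (2 * K),
      Astar i j = if (i : ℕ) / 2 = (j : ℕ) / 2 then 2 * (K : ℝ) ^ 3 else 0)
    (A B : Matrix (Fin (2 * K)) (Fin (2 * K)) ℝ)
    (hA : ∀ i j, A i j - Astar i j ∈ Set.Icc (0 : ℝ) 1)
    (hB : ∀ i j, B i j - (-(Astar i j)) ∈ Set.Icc (0 : ℝ) 1)
    (x y : Fin (2 * K) → ℝ)
    (hx : (∀ i, 0 ≤ x i) ∧ ∑ i, x i = 1) (hy : (∀ i, 0 ≤ y i) ∧ ∑ i, y i = 1)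
    (hwsB : ∀ j k : Fin (2 * K), (∑ i, x i * B i j) > (∑ i, x i * B i k) + 1 → y k = 0)
    (hwsA : ∀ j k : Fin (2 * K), (∑ i, A j i * y i) > (∑ i, A k i * y i) + 1 → x k = 0) :
    ∀ k : Fin K,
      (1 / (K : ℝ) - 1 / (K : ℝ) ^ 3 ≤
          x ⟨2 * (k : ℕ), by have := k.isLt; omega⟩ + x ⟨2 * (k : ℕ) + 1, by have := k.isLt; omega⟩ ∧
        x ⟨2 * (k : ℕ), by have := k.isLt; omega⟩ + x ⟨2 * (k : ℕ) + 1, by have := k.isLt; omega⟩ ≤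
          1 / (K : ℝ) + 1 / (K : ℝ) ^ 3) ∧
      (1 / (K : ℝ) - 1 / (K : ℝ) ^ 3 ≤
          y ⟨2 * (k : ℕ), by have := k.isLt; omega⟩ + y ⟨2 * (k : ℕ) + 1, by have := k.isLt; omega⟩ ∧
        y ⟨2 * (k : ℕ), by have := k.isLt; omega⟩ + y ⟨2 * (k : ℕ) + 1, by have := k.isLt; omega⟩ ≤
          1 / (K : ℝ) + 1 / (K : ℝ) ^ 3) := by
  intro k
  have hK0 : 0 < K := by omega
  have hX : ∑ b, pairSum x b = 1 := (sum_pairSum x).trans hx.2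
  have hY : ∑ b, pairSum y b = 1 := (sum_pairSum y).trans hy.2
  have hε : 1 / (K : ℝ) ^ 3 < 1 / Fintype.card (Fin K) := by
    rw [Fintype.card_fin]
    exact one_div_lt_one_div_of_lt (by positivity)
      (lt_self_pow₀ (by exact_mod_cast hK) (by norm_num))
  obtain ⟨hXclose, hYclose⟩ := forall_le_add_of_isWellSupported hX hY hε
    (isWellSupported_pairSum_row hK0 hAstar hA hy hwsA)
    (isWellSupported_pairSum_col hK0 hAstar hB hx hwsB)
  have hXk := mem_Icc_inv_card_of_forall_le_add hX hXclose k
  have hYk := mem_Icc_inv_card_of_forall_le_add hY hYclose k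
  rw [Fintype.card_fin] at hXk hYk
  exact ⟨hXk, hYk⟩
end

section
/- At most n poorly-positioned points in an equiangle sample: let n ≥ 1, K ≥ 8n³, and let p^1,...,p^{n³} ∈ [0,8]^n with p^k = p^{k-1} + (Σ_i e_i)/K. Call a real a ∈ [0,8] poorly-positioned if there exists an integer t ∈ {0,...,7} with |a - t| ≤ 80/K², and call a point poorly-positioned if some coordinate is poorly-positioned. If 160/K² < 1/K - 1/K² (guaranteed for K ≥ 8n³, n³ ≥ 161), then for each coordinate index l ∈ {1,...,n} at most one index k ∈ {1,...,n³} has p^k_l poorly-positioned; consequently at most n of the n³ points are poorly-positioned. -/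
open Classical

/-- A real number `a` is poorly-positioned if it is within `80/K²` of an integer in
`{0,...,7}`. -/
def PoorlyPositioned (K : ℕ) (a : ℝ) : Prop :=
  ∃ t : ℕ, t ≤ 7 ∧ |a - (t : ℝ)| ≤ 80 / (K : ℝ) ^ 2

/-!
Along coordinate `l` the sample is the progression `a + k/K` with `k < n³ ≤ K`. If `a + k/K`
and `a + k'/K` are within `80/K²` of naturals `t` and `t'`, then `|t - t'|` is at most
`|k - k'|/K + 160/K² < (K - 1)/K + 1/K - 1/K² < 1`, so `t = t'`; then
`|k - k'|/K ≤ 160/K² < 1/K` forces `k = k'`.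
Each coordinate thus accounts for at most one poorly-positioned point.
-/

theorem Fin.eq_zero_add_nsmul_of_succ_eq_add {α : Type*} [AddMonoid α] {m : ℕ} {d : α}
    (f : Fin m → α) (hf : ∀ (k : Fin m) (h : (k : ℕ) + 1 < m), f ⟨k + 1, h⟩ = f k + d)
    (k : Fin m) : f k = f ⟨0, k.pos⟩ + (k : ℕ) • d := by
  obtain ⟨j, hj⟩ := k
  induction j with
  | zero => simp
  | succ j ih => rw [hf ⟨j, by omega⟩ hj, ih (by omega), succ_nsmul, add_assoc]

theorem Nat.eq_of_abs_cast_sub_lt_one {a b : ℕ} (h : |(a : ℝ) - b| < 1) : a = b := by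
  have : |((a : ℤ) - b)| < 1 := by exact_mod_cast h
  have := Int.abs_lt_one_iff.mp this
  omega

theorem Nat.abs_cast_sub_le_of_lt {a b K : ℕ} (ha : a < K) (hb : b < K) :
    |(a : ℝ) - b| ≤ K - 1 := by
  have ha' : (a : ℝ) + 1 ≤ K := by exact_mod_cast ha
  have hb' : (b : ℝ) + 1 ≤ K := by exact_mod_cast hb
  rw [abs_sub_le_iff]
  constructor <;> linarith [(a.cast_nonneg : (0 : ℝ) ≤ a), (b.cast_nonneg : (0 : ℝ) ≤ b)]

theorem eq_of_abs_add_div_sub_natCast_le {K k k' t t' : ℕ} {a ε : ℝ}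
    (hε : 2 * ε < 1 / K - 1 / K ^ 2) (hk : k < K) (hk' : k' < K)
    (ht : |a + k / K - t| ≤ ε) (ht' : |a + k' / K - t'| ≤ ε) : k = k' := by
  have hK : (0 : ℝ) < K := by exact_mod_cast (Nat.zero_le k).trans_lt hk
  have hclose : |((k : ℝ) - k') / K - ((t : ℝ) - t')| ≤ 2 * ε := by
    calc |((k : ℝ) - k') / K - ((t : ℝ) - t')|
        = |(a + k / K - t) - (a + k' / K - t')| := by congr 1; ring
      _ ≤ |a + k / K - t| + |a + k' / K - t'| := abs_sub _ _
      _ ≤ 2 * ε := by linarith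
  have hspread : |((k : ℝ) - k') / K| ≤ 1 - 1 / K := by
    rw [abs_div, abs_of_pos hK, div_le_iff₀ hK, sub_mul, one_div_mul_cancel hK.ne']
    linarith [Nat.abs_cast_sub_le_of_lt hk hk']
  have hK2 : 0 < 1 / (K : ℝ) ^ 2 := by positivity
  have htt : t = t' := by
    refine Nat.eq_of_abs_cast_sub_lt_one ?_
    linarith [abs_sub_abs_le_abs_sub ((t : ℝ) - t') (((k : ℝ) - k') / K),
      abs_sub_comm ((t : ℝ) - t') (((k : ℝ) - k') / K)]
  subst htt
  refine Nat.eq_of_abs_cast_sub_lt_one ?_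
  rw [sub_self, sub_zero, abs_div, abs_of_pos hK, div_le_iff₀ hK] at hclose
  have : 2 * ε * K < 1 := by
    rw [← lt_div_iff₀ hK]
    linarith
  linarith

theorem PoorlyPositioned.eq_of_add_div {K k k' : ℕ} {a : ℝ}
    (hgap : 160 / (K : ℝ) ^ 2 < 1 / K - 1 / K ^ 2) (hk : k < K) (hk' : k' < K)
    (h : PoorlyPositioned K (a + k / K)) (h' : PoorlyPositioned K (a + k' / K)) : k = k' := by
  obtain ⟨t, -, ht⟩ := h
  obtain ⟨t', -, ht'⟩ := h'
  have hε : (2 : ℝ) * (80 / K ^ 2) = 160 / K ^ 2 := by ring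
  exact eq_of_abs_add_div_sub_natCast_le (hε ▸ hgap) hk hk' ht ht'

theorem Finset.card_filter_exists_le_card {ι κ : Type*} [Fintype ι] [Fintype κ]
    (P : ι → κ → Prop) [DecidablePred fun k => ∃ l, P k l]
    (hP : ∀ l k k', P k l → P k' l → k = k') :
    (univ.filter fun k => ∃ l, P k l).card ≤ Fintype.card κ := by
  calc (univ.filter fun k => ∃ l, P k l).card
      ≤ (univ.biUnion fun l => univ.filter fun k => P k l).card :=
        card_le_card fun k hk => by simpa using hk
    _ ≤ ∑ l : κ, (univ.filter fun k => P k l).card := card_biUnion_le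
    _ ≤ ∑ _l : κ, 1 :=
        sum_le_sum fun l _ => card_le_one.mpr fun k hk k' hk' =>
          hP l k k' (by simpa using hk) (by simpa using hk')
    _ = Fintype.card κ := by simp

theorem few_poorly_positioned_points_general (n K : ℕ) (hK : 8 * n ^ 3 ≤ K)
    (hgap : 160 / (K : ℝ) ^ 2 < 1 / (K : ℝ) - 1 / (K : ℝ) ^ 2)
    (p : Fin (n ^ 3) → Fin n → ℝ)
    (hstep : ∀ (k : Fin (n ^ 3)) (h : (k : ℕ) + 1 < n ^ 3) (i : Fin n),
      p ⟨(k : ℕ) + 1, h⟩ i = p k i + 1 / K) :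
    (∀ l : Fin n, ∀ k k' : Fin (n ^ 3),
      PoorlyPositioned K (p k l) → PoorlyPositioned K (p k' l) → k = k') ∧
    (Finset.univ.filter (fun k : Fin (n ^ 3) => ∃ l, PoorlyPositioned K (p k l))).card ≤ n := by
  have hprog : ∀ l k, p k l = p ⟨0, k.pos⟩ l + (k : ℕ) / K := fun l k => by
    rw [Fin.eq_zero_add_nsmul_of_succ_eq_add (fun k => p k l) (fun k h => hstep k h l) k,
      nsmul_eq_mul, mul_one_div]
  have hlt : ∀ k : Fin (n ^ 3), (k : ℕ) < K := fun k => by omega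
  have hunique : ∀ l : Fin n, ∀ k k' : Fin (n ^ 3),
      PoorlyPositioned K (p k l) → PoorlyPositioned K (p k' l) → k = k' := by
    intro l k k' h h'
    rw [hprog l k] at h
    rw [hprog l k'] at h'
    exact Fin.ext (PoorlyPositioned.eq_of_add_div hgap (hlt k) (hlt k') h h')
  refine ⟨hunique, ?_⟩
  simpa using Finset.card_filter_exists_le_card (fun k l => PoorlyPositioned K (p k l)) hunique

/-- In an equiangle sample, each coordinate can be poorly-positioned at at most one
sample point; consequently at most `n` of the `n³` points are poorly-positioned. -/
theorem few_poorly_positioned_points (n K : ℕ) (hn : 1 ≤ n) (hK : 8 * n ^ 3 ≤ K)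
    (hgap : 160 / (K : ℝ) ^ 2 < 1 / (K : ℝ) - 1 / (K : ℝ) ^ 2)
    (p : Fin (n ^ 3) → Fin n → ℝ)
    (hrange : ∀ k i, p k i ∈ Set.Icc (0 : ℝ) 8)
    (hstep : ∀ (k : Fin (n ^ 3)) (h : (k : ℕ) + 1 < n ^ 3) (i : Fin n),
      p ⟨(k : ℕ) + 1, h⟩ i = p k i + 1 / K) :
    (∀ l : Fin n, ∀ k k' : Fin (n ^ 3),
      PoorlyPositioned K (p k l) → PoorlyPositioned K (p k' l) → k = k') ∧
    (Finset.univ.filter (fun k : Fin (n ^ 3) => ∃ l, PoorlyPositioned K (p k l))).card ≤ n :=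
  few_poorly_positioned_points_general n K hK hgap p hstep
end
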